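/- arXiv:1710.00313 — 5 statements merged into one kernel-verified Lean document; each statement's English description precedes it below -/
import Mathlib

section
/- Let X = {0,1,2} ∪ {s_n : n ∈ ℤ} ∪ {t_n : n ∈ ℤ} ⊂ [0,2] where (s_n) is strictly increasing with limits 0 (as n → −∞) and 1 (as n → +∞), and (t_n) is strictly increasing with limits 1 and 2. Define f : X → X fixing 0, 1, 2 and sending s_n ↦ s_{n+1}, t_n ↦ t_{n+1}. Then f is a homeomorphism of the compact set X that has the limit shadowing property but does not have the shadowing property. -/
open Filter Topology

variable {X : Type*} [MetricSpace X]

/-- `x` is a δ-pseudo orbit of `f`. -/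
def IsPseudoOrbit (f : X → X) (δ : ℝ) (x : ℕ → X) : Prop :=
  ∀ i, dist (f (x i)) (x (i + 1)) ≤ δ

/-- `x` is a limit pseudo orbit of `f`. -/
def IsLimitPseudoOrbit (f : X → X) (x : ℕ → X) : Prop :=
  Tendsto (fun i => dist (f (x i)) (x (i + 1))) atTop (nhds 0)

/-- `y` ε-shadows the sequence `x`. -/
def Shadows (f : X → X) (ε : ℝ) (x : ℕ → X) (y : X) : Prop :=
  ∀ i, dist (x i) (f^[i] y) ≤ ε

/-- `y` is a limit shadowing point of the sequence `x`. -/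
def LimitShadows (f : X → X) (x : ℕ → X) (y : X) : Prop :=
  Tendsto (fun i => dist (x i) (f^[i] y)) atTop (nhds 0)

/-- the shadowing property. -/
def HasShadowing (f : X → X) : Prop :=
  ∀ ε > 0, ∃ δ > 0, ∀ x : ℕ → X, IsPseudoOrbit f δ x → ∃ y, Shadows f ε x y

/-- the limit shadowing property. -/
def HasLimitShadowing (f : X → X) : Prop :=
  ∀ x : ℕ → X, IsLimitPseudoOrbit f x → ∃ y, LimitShadows f x y

/-- the non-wandering set Ω(f). -/
def NonWandering (f : X → X) : Set X :=
  {x | ∀ U ∈ nhds x, ∃ n > 0, (f^[n] '' U ∩ U).Nonempty}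

/-- there is a δ-chain of `f` from `x` to `y` lying in `S`. -/
def ChainFromIn (f : X → X) (S : Set X) (δ : ℝ) (x y : X) : Prop :=
  ∃ k ≥ 1, ∃ c : ℕ → X, c 0 = x ∧ c k = y ∧ (∀ i ≤ k, c i ∈ S) ∧
    ∀ i < k, dist (f (c i)) (c (i + 1)) ≤ δ

/-- the chain recurrent set CR(f). -/
def ChainRecurrent (f : X → X) : Set X :=
  {x | ∀ δ > 0, ChainFromIn f Set.univ δ x x}

/-- the closure of the forward orbit of `x`. -/
def orbitClosure (f : X → X) (x : X) : Set X := closure (Set.range fun n => f^[n] x)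

/-- `x` is a minimal point of `f`. -/
def IsMinimalPoint (f : X → X) (x : X) : Prop :=
  ∀ K ⊆ orbitClosure f x, K.Nonempty → IsClosed K → Set.MapsTo f K K → K = orbitClosure f x

/-- the set of minimal points M(f). -/
def MinimalPoints (f : X → X) : Set X := {x | IsMinimalPoint f x}

/-- `f` is an equicontinuous map. -/
def EquicontMap (f : X → X) : Prop :=
  ∀ ε > 0, ∃ δ > 0, ∀ x y : X, dist x y ≤ δ → ∀ n, dist (f^[n] x) (f^[n] y) ≤ ε

set_option linter.unusedSectionVars false

section TLAux

variable {s t : ℤ → ℝ} {S : Set ℝ} {f : ℝ → ℝ}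

lemma TL_s_pos (hs : StrictMono s) (hs0 : Tendsto s atBot (nhds 0)) (n : ℤ) : 0 < s n := by
  have h1 : (0:ℝ) ≤ s (n - 1) := by
    refine le_of_tendsto hs0 ?_
    filter_upwards [eventually_le_atBot (n - 1)] with m hm
    exact hs.monotone hm
  linarith [hs (sub_one_lt n)]

lemma TL_s_lt_one (hs : StrictMono s) (hs1 : Tendsto s atTop (nhds 1)) (n : ℤ) : s n < 1 := by
  have h1 : s (n + 1) ≤ 1 := by
    refine ge_of_tendsto hs1 ?_
    filter_upwards [eventually_ge_atTop (n + 1)] with m hm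
    exact hs.monotone hm
  linarith [hs (lt_add_one n)]

lemma TL_t_gt_one (ht : StrictMono t) (ht1 : Tendsto t atBot (nhds 1)) (n : ℤ) : 1 < t n := by
  have h1 : (1:ℝ) ≤ t (n - 1) := by
    refine le_of_tendsto ht1 ?_
    filter_upwards [eventually_le_atBot (n - 1)] with m hm
    exact ht.monotone hm
  linarith [ht (sub_one_lt n)]

lemma TL_t_lt_two (ht : StrictMono t) (ht2 : Tendsto t atTop (nhds 2)) (n : ℤ) : t n < 2 := by
  have h1 : t (n + 1) ≤ 2 := by
    refine ge_of_tendsto ht2 ?_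
    filter_upwards [eventually_ge_atTop (n + 1)] with m hm
    exact ht.monotone hm
  linarith [ht (lt_add_one n)]

variable (hmem : ∀ z : ℝ, z ∈ S ↔ z = 0 ∨ z = 1 ∨ z = 2 ∨ (∃ n, s n = z) ∨ (∃ n, t n = z))
variable (hs : StrictMono s) (ht : StrictMono t)
variable (hs0 : Tendsto s atBot (nhds 0)) (hs1 : Tendsto s atTop (nhds 1))
variable (ht1 : Tendsto t atBot (nhds 1)) (ht2 : Tendsto t atTop (nhds 2))

include hmem hs ht hs0 hs1 ht1 ht2

lemma TL_sub_Icc : S ⊆ Set.Icc (0:ℝ) 2 := by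
  intro z hz
  rcases (hmem z).1 hz with h | h | h | ⟨n, h⟩ | ⟨n, h⟩ <;> subst h <;>
    constructor <;> norm_num
  · exact (TL_s_pos hs hs0 n).le
  · exact le_trans (TL_s_lt_one hs hs1 n).le (by norm_num)
  · exact le_trans (by norm_num) (TL_t_gt_one ht ht1 n).le
  · exact (TL_t_lt_two ht ht2 n).le

lemma TL_gap_s (n : ℤ) {z : ℝ} (hz : z ∈ S) : ¬ (s n < z ∧ z < s (n + 1)) := by
  rintro ⟨h1, h2⟩
  rcases (hmem z).1 hz with h | h | h | ⟨m, h⟩ | ⟨m, h⟩ <;> subst h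
  · exact absurd h1 (not_lt.2 (TL_s_pos hs hs0 n).le)
  · exact absurd h2 (not_lt.2 (TL_s_lt_one hs hs1 (n+1)).le)
  · have := TL_s_lt_one hs hs1 (n+1); linarith
  · have hm1 : n < m := hs.lt_iff_lt.1 h1
    have hm2 : m < n + 1 := hs.lt_iff_lt.1 h2
    omega
  · have := TL_t_gt_one ht ht1 m
    have := TL_s_lt_one hs hs1 (n+1); linarith

lemma TL_gap_t (n : ℤ) {z : ℝ} (hz : z ∈ S) : ¬ (t n < z ∧ z < t (n + 1)) := by
  rintro ⟨h1, h2⟩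
  rcases (hmem z).1 hz with h | h | h | ⟨m, h⟩ | ⟨m, h⟩ <;> subst h
  · have := TL_t_gt_one ht ht1 n; linarith
  · exact absurd h1 (not_lt.2 (TL_t_gt_one ht ht1 n).le)
  · exact absurd h2 (not_lt.2 (TL_t_lt_two ht ht2 (n+1)).le)
  · have := TL_t_gt_one ht ht1 n
    have := TL_s_lt_one hs hs1 m; linarith
  · have hm1 : n < m := ht.lt_iff_lt.1 h1
    have hm2 : m < n + 1 := ht.lt_iff_lt.1 h2
    omega

end TLAux

set_option linter.unusedSectionVars false

section More
variable {s t : ℤ → ℝ} {S : Set ℝ} {f : ℝ → ℝ}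
variable (hmem : ∀ z : ℝ, z ∈ S ↔ z = 0 ∨ z = 1 ∨ z = 2 ∨ (∃ n, s n = z) ∨ (∃ n, t n = z))
variable (hs : StrictMono s) (ht : StrictMono t)
variable (hs0 : Tendsto s atBot (nhds 0)) (hs1 : Tendsto s atTop (nhds 1))
variable (ht1 : Tendsto t atBot (nhds 1)) (ht2 : Tendsto t atTop (nhds 2))

include hs hs0 hs1 in
lemma TL_between_s {z : ℝ} (h0 : 0 < z) (h1 : z < 1) (hnr : ∀ n, s n ≠ z) :
    ∃ N, s N < z ∧ z < s (N + 1) := by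
  have hb : ∃ n, s n < z := ((tendsto_order.1 hs0).2 z h0).exists
  obtain ⟨c, hc⟩ : ∃ n, z < s n := ((tendsto_order.1 hs1).1 z h1).exists
  obtain ⟨N, hN, hNmax⟩ := Int.exists_greatest_of_bdd (P := fun n => s n < z)
    ⟨c, fun n hn => (hs.lt_iff_lt.1 (lt_trans hn hc)).le⟩ hb
  refine ⟨N, hN, ?_⟩
  have h2 : ¬ s (N + 1) < z := fun h => by have := hNmax _ h; omega
  exact lt_of_le_of_ne (not_lt.1 h2) (Ne.symm (hnr (N + 1)))

include ht ht1 ht2 in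
lemma TL_between_t {z : ℝ} (h0 : 1 < z) (h1 : z < 2) (hnr : ∀ n, t n ≠ z) :
    ∃ N, t N < z ∧ z < t (N + 1) := by
  have hb : ∃ n, t n < z := ((tendsto_order.1 ht1).2 z h0).exists
  obtain ⟨c, hc⟩ : ∃ n, z < t n := ((tendsto_order.1 ht2).1 z h1).exists
  obtain ⟨N, hN, hNmax⟩ := Int.exists_greatest_of_bdd (P := fun n => t n < z)
    ⟨c, fun n hn => (ht.lt_iff_lt.1 (lt_trans hn hc)).le⟩ hb
  refine ⟨N, hN, ?_⟩
  have h2 : ¬ t (N + 1) < z := fun h => by have := hNmax _ h; omega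
  exact lt_of_le_of_ne (not_lt.1 h2) (Ne.symm (hnr (N + 1)))

include hmem hs ht hs0 hs1 ht1 ht2 in
lemma TL_closed : IsClosed S := by
  refine isClosed_of_closure_subset ?_
  intro z hz
  by_contra hzS
  have hzI : z ∈ Set.Icc (0:ℝ) 2 :=
    closure_minimal (TL_sub_Icc hmem hs ht hs0 hs1 ht1 ht2) isClosed_Icc hz
  rw [hmem] at hzS
  push_neg at hzS
  obtain ⟨hz0, hz1, hz2, hzs, hzt⟩ := hzS
  rcases lt_trichotomy z 1 with hlt | heq | hgt
  · have h0 : 0 < z := lt_of_le_of_ne hzI.1 (Ne.symm hz0)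
    obtain ⟨N, hN1, hN2⟩ := TL_between_s hs hs0 hs1 h0 hlt hzs
    have hrpos : 0 < min (z - s N) (s (N + 1) - z) := lt_min (by linarith) (by linarith)
    obtain ⟨w, hwS, hwd⟩ := Metric.mem_closure_iff.1 hz _ hrpos
    rw [Real.dist_eq] at hwd
    have habs := abs_lt.1 hwd
    refine TL_gap_s hmem hs ht hs0 hs1 ht1 ht2 N hwS ⟨?_, ?_⟩
    · have := min_le_left (z - s N) (s (N + 1) - z); linarith
    · have := min_le_right (z - s N) (s (N + 1) - z); linarith
  · exact hz1 heq
  · have h2 : z < 2 := lt_of_le_of_ne hzI.2 hz2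
    obtain ⟨N, hN1, hN2⟩ := TL_between_t ht ht1 ht2 hgt h2 hzt
    have hrpos : 0 < min (z - t N) (t (N + 1) - z) := lt_min (by linarith) (by linarith)
    obtain ⟨w, hwS, hwd⟩ := Metric.mem_closure_iff.1 hz _ hrpos
    rw [Real.dist_eq] at hwd
    have habs := abs_lt.1 hwd
    refine TL_gap_t hmem hs ht hs0 hs1 ht1 ht2 N hwS ⟨?_, ?_⟩
    · have := min_le_left (z - t N) (t (N + 1) - z); linarith
    · have := min_le_right (z - t N) (t (N + 1) - z); linarith

end More

section Cont
variable {s t : ℤ → ℝ} {S : Set ℝ} {f : ℝ → ℝ}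
variable (hmem : ∀ z : ℝ, z ∈ S ↔ z = 0 ∨ z = 1 ∨ z = 2 ∨ (∃ n, s n = z) ∨ (∃ n, t n = z))
variable (hs : StrictMono s) (ht : StrictMono t)
variable (hs0 : Tendsto s atBot (nhds 0)) (hs1 : Tendsto s atTop (nhds 1))
variable (ht1 : Tendsto t atBot (nhds 1)) (ht2 : Tendsto t atTop (nhds 2))
variable (hf0 : f 0 = 0) (hf1 : f 1 = 1) (hf2 : f 2 = 2)
variable (hfs : ∀ n : ℤ, f (s n) = s (n + 1)) (hft : ∀ n : ℤ, f (t n) = t (n + 1))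

include hmem hs ht hs0 hs1 ht1 ht2 hf0 hf1 hf2 hfs hft in
lemma TL_cont_aux {b : ℝ} (hb : b ∈ S) {ε : ℝ} (hε : 0 < ε) :
    ∃ δ > 0, ∀ a ∈ S, |a - b| < δ → |f a - f b| < ε := by
  have sp : ∀ n, 0 < s n := TL_s_pos hs hs0
  have sl1 : ∀ n, s n < 1 := TL_s_lt_one hs hs1
  have tg1 : ∀ n, 1 < t n := TL_t_gt_one ht ht1
  have tl2 : ∀ n, t n < 2 := TL_t_lt_two ht ht2
  rcases (hmem b).1 hb with h | h | h | ⟨n, h⟩ | ⟨n, h⟩ <;> subst h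
  · -- b = 0
    obtain ⟨n₀, hn₀⟩ := eventually_atBot.1 ((tendsto_order.1 hs0).2 ε hε)
    refine ⟨min (s n₀) ε, lt_min (sp n₀) hε, ?_⟩
    intro a ha hd
    have hδ1 : min (s n₀) ε ≤ s n₀ := min_le_left _ _
    rcases (hmem a).1 ha with h | h | h | ⟨m, h⟩ | ⟨m, h⟩ <;> subst h
    · simpa [hf0] using hε
    · exfalso; rw [sub_zero, abs_one] at hd; have := sl1 n₀; linarith
    · exfalso; rw [sub_zero] at hd
      have : |(2:ℝ)| = 2 := by norm_num
      rw [this] at hd; have := sl1 n₀; linarith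
    · rw [hfs, hf0, sub_zero, abs_of_pos (sp (m+1))]
      rw [sub_zero, abs_of_pos (sp m)] at hd
      have hm : m < n₀ := hs.lt_iff_lt.1 (lt_of_lt_of_le hd hδ1)
      exact hn₀ (m+1) (by omega)
    · exfalso; rw [sub_zero, abs_of_pos (by linarith [tg1 m])] at hd
      have := tg1 m; have := sl1 n₀; linarith
  · -- b = 1
    obtain ⟨n₁, hn₁⟩ := eventually_atTop.1 ((tendsto_order.1 hs1).1 (1-ε) (by linarith))
    obtain ⟨m₁, hm₁⟩ := eventually_atBot.1 ((tendsto_order.1 ht1).2 (1+ε) (by linarith))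
    refine ⟨min (1 - s n₁) (t m₁ - 1), lt_min (by linarith [sl1 n₁]) (by linarith [tg1 m₁]), ?_⟩
    intro a ha hd
    have hδ1 : min (1 - s n₁) (t m₁ - 1) ≤ 1 - s n₁ := min_le_left _ _
    have hδ2 : min (1 - s n₁) (t m₁ - 1) ≤ t m₁ - 1 := min_le_right _ _
    have habs := abs_lt.1 hd
    rcases (hmem a).1 ha with h | h | h | ⟨m, h⟩ | ⟨m, h⟩ <;> subst h
    · exfalso; have := sp n₁; linarith [habs.1, habs.2]
    · simpa [hf1] using hε
    · exfalso; have := tg1 m₁; have := tl2 m₁; linarith [habs.2]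
    · rw [hfs, hf1]
      have hm : n₁ < m := hs.lt_iff_lt.1 (by linarith [habs.1, sl1 m])
      have h1 : 1 - ε < s (m+1) := hn₁ (m+1) (by omega)
      have h2 : s (m+1) < 1 := sl1 (m+1)
      rw [abs_lt]; constructor <;> linarith
    · rw [hft, hf1]
      have hm : m < m₁ := ht.lt_iff_lt.1 (by linarith [habs.2, tg1 m])
      have h1 : t (m+1) < 1 + ε := hm₁ (m+1) (by omega)
      have h2 : 1 < t (m+1) := tg1 (m+1)
      rw [abs_lt]; constructor <;> linarith
  · -- b = 2
    obtain ⟨n₂, hn₂⟩ := eventually_atTop.1 ((tendsto_order.1 ht2).1 (2-ε) (by linarith))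
    refine ⟨2 - t n₂, by linarith [tl2 n₂], ?_⟩
    intro a ha hd
    have habs := abs_lt.1 hd
    have htg := tg1 n₂
    rcases (hmem a).1 ha with h | h | h | ⟨m, h⟩ | ⟨m, h⟩ <;> subst h
    · exfalso; linarith [habs.1]
    · exfalso; linarith [habs.1]
    · simpa [hf2] using hε
    · exfalso; have := sl1 m; have := sp m; linarith [habs.1]
    · rw [hft, hf2]
      have hm : n₂ < m := ht.lt_iff_lt.1 (by linarith [habs.1, tl2 m])
      have h1 : 2 - ε < t (m+1) := hn₂ (m+1) (by omega)
      have h2 : t (m+1) < 2 := tl2 (m+1)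
      rw [abs_lt]; constructor <;> linarith
  · -- b = s n
    have hg1 : s (n-1) < s n := hs (sub_one_lt n)
    have hg2 : s n < s (n+1) := hs (lt_add_one n)
    refine ⟨min (s n - s (n-1)) (s (n+1) - s n), lt_min (by linarith) (by linarith), ?_⟩
    intro a ha hd
    have habs := abs_lt.1 hd
    have hδ1 := min_le_left (s n - s (n-1)) (s (n+1) - s n)
    have hδ2 := min_le_right (s n - s (n-1)) (s (n+1) - s n)
    have haeq : a = s n := by
      by_contra hne
      rcases lt_or_gt_of_ne hne with h | h
      · exact TL_gap_s hmem hs ht hs0 hs1 ht1 ht2 (n-1) ha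
          ⟨by linarith [habs.1], by rwa [sub_add_cancel]⟩
      · exact TL_gap_s hmem hs ht hs0 hs1 ht1 ht2 n ha ⟨h, by linarith [habs.2]⟩
    rw [haeq, sub_self, abs_zero]; exact hε
  · -- b = t n
    have hg1 : t (n-1) < t n := ht (sub_one_lt n)
    have hg2 : t n < t (n+1) := ht (lt_add_one n)
    refine ⟨min (t n - t (n-1)) (t (n+1) - t n), lt_min (by linarith) (by linarith), ?_⟩
    intro a ha hd
    have habs := abs_lt.1 hd
    have hδ1 := min_le_left (t n - t (n-1)) (t (n+1) - t n)
    have hδ2 := min_le_right (t n - t (n-1)) (t (n+1) - t n)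
    have haeq : a = t n := by
      by_contra hne
      rcases lt_or_gt_of_ne hne with h | h
      · exact TL_gap_t hmem hs ht hs0 hs1 ht1 ht2 (n-1) ha
          ⟨by linarith [habs.1], by rwa [sub_add_cancel]⟩
      · exact TL_gap_t hmem hs ht hs0 hs1 ht1 ht2 n ha ⟨h, by linarith [habs.2]⟩
    rw [haeq, sub_self, abs_zero]; exact hε

end Cont

section Limit
variable {s t : ℤ → ℝ} {S : Set ℝ} {f : ℝ → ℝ}
variable (hmem : ∀ z : ℝ, z ∈ S ↔ z = 0 ∨ z = 1 ∨ z = 2 ∨ (∃ n, s n = z) ∨ (∃ n, t n = z))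
variable (hs : StrictMono s) (ht : StrictMono t)
variable (hs0 : Tendsto s atBot (nhds 0)) (hs1 : Tendsto s atTop (nhds 1))
variable (ht1 : Tendsto t atBot (nhds 1)) (ht2 : Tendsto t atTop (nhds 2))
variable (hf0 : f 0 = 0) (hf1 : f 1 = 1) (hf2 : f 2 = 2)
variable (hfs : ∀ n : ℤ, f (s n) = s (n + 1)) (hft : ∀ n : ℤ, f (t n) = t (n + 1))

include hmem hs ht hs0 hs1 ht1 ht2 hf0 hf1 hf2 hfs hft in
lemma TL_limit_orbit (u : ℕ → ℝ) (hu : ∀ i, u i ∈ S)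
    (hd : Tendsto (fun i => dist (f (u i)) (u (i + 1))) atTop (nhds 0)) :
    ∃ p ∈ S, f p = p ∧ Tendsto u atTop (nhds p) := by
  have sp : ∀ n, 0 < s n := TL_s_pos hs hs0
  have sl1 : ∀ n, s n < 1 := TL_s_lt_one hs hs1
  have tg1 : ∀ n, 1 < t n := TL_t_gt_one ht ht1
  have tl2 : ∀ n, t n < 2 := TL_t_lt_two ht ht2
  have hSc : IsClosed S := TL_closed hmem hs ht hs0 hs1 ht1 ht2
  have hIcc := TL_sub_Icc hmem hs ht hs0 hs1 ht1 ht2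
  have hub : ∀ i, u i ≤ 2 := fun i => (hIcc (hu i)).2
  have hlb : ∀ i, 0 ≤ u i := fun i => (hIcc (hu i)).1
  have bddle : atTop.IsBoundedUnder (· ≤ ·) u := isBoundedUnder_of ⟨2, hub⟩
  have bddge : atTop.IsBoundedUnder (· ≥ ·) u := isBoundedUnder_of ⟨0, hlb⟩
  have cobdd : atTop.IsCoboundedUnder (· ≤ ·) u := bddge.isCoboundedUnder_le
  have cobdd' : atTop.IsCoboundedUnder (· ≥ ·) u := bddle.isCoboundedUnder_ge
  have hfge : ∀ z ∈ S, z ≤ f z := by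
    intro z hz
    rcases (hmem z).1 hz with h | h | h | ⟨m, h⟩ | ⟨m, h⟩ <;> subst h
    · rw [hf0]
    · rw [hf1]
    · rw [hf2]
    · rw [hfs]; exact (hs (lt_add_one m)).le
    · rw [hft]; exact (ht (lt_add_one m)).le
  have hstep : ∀ i, u i - dist (f (u i)) (u (i + 1)) ≤ u (i + 1) := by
    intro i
    have h1 := hfge _ (hu i)
    have h2 : f (u i) - u (i + 1) ≤ |f (u i) - u (i + 1)| := le_abs_self _
    rw [Real.dist_eq]; linarith
  -- limsup belongs to S
  have hLS : limsup u atTop ∈ S := by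
    rw [← hSc.closure_eq]
    refine Metric.mem_closure_iff.2 fun ε hε => ?_
    have h1 : ∃ᶠ i in atTop, limsup u atTop - ε < u i :=
      frequently_lt_of_lt_limsup cobdd (by linarith)
    have h2 : ∀ᶠ i in atTop, u i < limsup u atTop + ε :=
      eventually_lt_of_limsup_lt (by linarith) bddle
    obtain ⟨i, hi1, hi2⟩ := (h1.and_eventually h2).exists
    exact ⟨u i, hu i, by rw [Real.dist_eq, abs_lt]; constructor <;> linarith⟩
  -- limsup is one of the fixed points
  have hLfix : limsup u atTop = 0 ∨ limsup u atTop = 1 ∨ limsup u atTop = 2 := by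
    rcases (hmem _).1 hLS with h | h | h | ⟨n, h⟩ | ⟨n, h⟩
    · exact Or.inl h
    · exact Or.inr (Or.inl h)
    · exact Or.inr (Or.inr h)
    · exfalso
      have hgap : (0:ℝ) < s (n+1) - s n := by linarith [hs (lt_add_one n)]
      have h2 : ∀ᶠ i in atTop, u i < s (n+1) :=
        eventually_lt_of_limsup_lt (by rw [← h]; exact hs (lt_add_one n)) bddle
      have h3 : ∀ᶠ i in atTop, dist (f (u i)) (u (i+1)) < s (n+1) - s n :=
        (tendsto_order.1 hd).2 _ hgap
      have h4 : ∀ᶠ i in atTop, u (i+1) < s (n+1) := (tendsto_add_atTop_nat 1).eventually h2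
      have h1 : ∃ᶠ i in atTop, s (n-1) < u i :=
        frequently_lt_of_lt_limsup cobdd (by rw [← h]; exact hs (sub_one_lt n))
      obtain ⟨i, hi1, hi2, hi3, hi4⟩ := (h1.and_eventually (h2.and (h3.and h4))).exists
      have hui : u i = s n := by
        rcases lt_trichotomy (u i) (s n) with hlt | he | hgt
        · exact absurd ⟨hi1, by rwa [sub_add_cancel]⟩
            (TL_gap_s hmem hs ht hs0 hs1 ht1 ht2 (n-1) (hu i))
        · exact he
        · exact absurd ⟨hgt, hi2⟩ (TL_gap_s hmem hs ht hs0 hs1 ht1 ht2 n (hu i))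
      have h5 : f (u i) - u (i+1) ≤ dist (f (u i)) (u (i+1)) := by
        rw [Real.dist_eq]; exact le_abs_self _
      have hfu : f (u i) = s (n + 1) := by rw [hui, hfs]
      rw [hfu] at h5 hi3
      exact TL_gap_s hmem hs ht hs0 hs1 ht1 ht2 n (hu (i+1)) ⟨by linarith, hi4⟩
    · exfalso
      have hgap : (0:ℝ) < t (n+1) - t n := by linarith [ht (lt_add_one n)]
      have h2 : ∀ᶠ i in atTop, u i < t (n+1) :=
        eventually_lt_of_limsup_lt (by rw [← h]; exact ht (lt_add_one n)) bddle
      have h3 : ∀ᶠ i in atTop, dist (f (u i)) (u (i+1)) < t (n+1) - t n :=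
        (tendsto_order.1 hd).2 _ hgap
      have h4 : ∀ᶠ i in atTop, u (i+1) < t (n+1) := (tendsto_add_atTop_nat 1).eventually h2
      have h1 : ∃ᶠ i in atTop, t (n-1) < u i :=
        frequently_lt_of_lt_limsup cobdd (by rw [← h]; exact ht (sub_one_lt n))
      obtain ⟨i, hi1, hi2, hi3, hi4⟩ := (h1.and_eventually (h2.and (h3.and h4))).exists
      have hui : u i = t n := by
        rcases lt_trichotomy (u i) (t n) with hlt | he | hgt
        · exact absurd ⟨hi1, by rwa [sub_add_cancel]⟩
            (TL_gap_t hmem hs ht hs0 hs1 ht1 ht2 (n-1) (hu i))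
        · exact he
        · exact absurd ⟨hgt, hi2⟩ (TL_gap_t hmem hs ht hs0 hs1 ht1 ht2 n (hu i))
      have h5 : f (u i) - u (i+1) ≤ dist (f (u i)) (u (i+1)) := by
        rw [Real.dist_eq]; exact le_abs_self _
      have hfu : f (u i) = t (n + 1) := by rw [hui, hft]
      rw [hfu] at h5 hi3
      exact TL_gap_t hmem hs ht hs0 hs1 ht1 ht2 n (hu (i+1)) ⟨by linarith, hi4⟩
  -- liminf = limsup
  have hll : liminf u atTop = limsup u atTop := by
    by_contra hne
    have hlt : liminf u atTop < limsup u atTop :=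
      lt_of_le_of_ne (liminf_le_limsup bddle bddge) hne
    have h0inf : 0 ≤ liminf u atTop := le_liminf_of_le cobdd' (Eventually.of_forall hlb)
    obtain ⟨a, b, hab, hla, hbL, hgap⟩ :
        ∃ a b : ℝ, a < b ∧ liminf u atTop < a ∧ b < limsup u atTop ∧
          ∀ z ∈ S, ¬ (a < z ∧ z < b) := by
      rcases lt_or_ge (liminf u atTop) 1 with hl1 | hl1
      · have hL1 : 1 ≤ limsup u atTop := by
          rcases hLfix with h | h | h <;> rw [h] at hlt ⊢ <;> linarith
        obtain ⟨n, hn⟩ := ((tendsto_order.1 hs1).1 _ hl1).exists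
        exact ⟨s n, s (n+1), hs (lt_add_one n), hn, by linarith [sl1 (n+1)],
          fun z hz => TL_gap_s hmem hs ht hs0 hs1 ht1 ht2 n hz⟩
      · have hL2 : limsup u atTop = 2 := by
          rcases hLfix with h | h | h <;> rw [h] at hlt ⊢ <;> linarith
        obtain ⟨n, hn⟩ := ((tendsto_order.1 ht2).1 _
          (show liminf u atTop < 2 by rw [hL2] at hlt; exact hlt)).exists
        exact ⟨t n, t (n+1), ht (lt_add_one n), hn, by rw [hL2]; linarith [tl2 (n+1)],
          fun z hz => TL_gap_t hmem hs ht hs0 hs1 ht1 ht2 n hz⟩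
    have hδ : ∀ᶠ i in atTop, dist (f (u i)) (u (i+1)) < b - a :=
      (tendsto_order.1 hd).2 _ (by linarith)
    obtain ⟨N, hN⟩ := eventually_atTop.1 hδ
    have hfreqb : ∃ᶠ i in atTop, b < u i := frequently_lt_of_lt_limsup cobdd hbL
    have hfreqa : ∃ᶠ i in atTop, u i < a := frequently_lt_of_liminf_lt cobdd' hla
    obtain ⟨i₁, hi₁b, hi₁N⟩ := (hfreqb.and_eventually (eventually_ge_atTop N)).exists
    have hprop : ∀ k, b ≤ u (i₁ + k) := by
      intro k
      induction k with
      | zero => simpa using hi₁b.le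
      | succ k ih =>
        have hdk := hN (i₁ + k) (le_trans hi₁N (Nat.le_add_right _ _))
        have hst := hstep (i₁ + k)
        have h1 : a < u (i₁ + k + 1) := by linarith
        by_contra hcon
        push_neg at hcon
        exact hgap _ (hu (i₁ + k + 1)) ⟨h1, hcon⟩
    obtain ⟨j, hj1, hj2⟩ := (hfreqa.and_eventually (eventually_ge_atTop i₁)).exists
    have hpj := hprop (j - i₁)
    rw [Nat.add_sub_cancel' hj2] at hpj
    linarith
  exact ⟨limsup u atTop, hLS, by rcases hLfix with h | h | h <;> rw [h] <;> assumption,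
    tendsto_of_liminf_eq_limsup hll rfl bddle bddge⟩

end Limit

section Bij
variable {s t : ℤ → ℝ} {S : Set ℝ} {f : ℝ → ℝ}
variable (hmem : ∀ z : ℝ, z ∈ S ↔ z = 0 ∨ z = 1 ∨ z = 2 ∨ (∃ n, s n = z) ∨ (∃ n, t n = z))
variable (hs : StrictMono s) (ht : StrictMono t)
variable (hs0 : Tendsto s atBot (nhds 0)) (hs1 : Tendsto s atTop (nhds 1))
variable (ht1 : Tendsto t atBot (nhds 1)) (ht2 : Tendsto t atTop (nhds 2))
variable (hf0 : f 0 = 0) (hf1 : f 1 = 1) (hf2 : f 2 = 2)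
variable (hfs : ∀ n : ℤ, f (s n) = s (n + 1)) (hft : ∀ n : ℤ, f (t n) = t (n + 1))

include hmem hs ht hs0 hs1 ht1 ht2 hf0 hf1 hf2 hfs hft in
lemma TL_injOn : ∀ a ∈ S, ∀ b ∈ S, f a = f b → a = b := by
  have sp : ∀ n, 0 < s n := TL_s_pos hs hs0
  have sl1 : ∀ n, s n < 1 := TL_s_lt_one hs hs1
  have tg1 : ∀ n, 1 < t n := TL_t_gt_one ht ht1
  have tl2 : ∀ n, t n < 2 := TL_t_lt_two ht ht2
  intro a ha b hb hab
  rcases (hmem a).1 ha with h | h | h | ⟨m, h⟩ | ⟨m, h⟩ <;>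
    rcases (hmem b).1 hb with h' | h' | h' | ⟨k, h'⟩ | ⟨k, h'⟩ <;>
    subst h <;> subst h' <;>
    simp only [hf0, hf1, hf2, hfs, hft] at hab <;>
    first
      | rfl
      | (exact congrArg s (by have h2 := hs.injective hab; omega))
      | (exact congrArg t (by have h2 := ht.injective hab; omega))
      | (exfalso; linarith)
      | (exfalso; linarith [sp (k+1), sl1 (k+1), tg1 (k+1), tl2 (k+1)])
      | (exfalso; linarith [sp (m+1), sl1 (m+1), tg1 (m+1), tl2 (m+1)])
      | (exfalso; linarith [sl1 (m+1), tg1 (k+1)])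
      | (exfalso; linarith [sl1 (k+1), tg1 (m+1)])

include hmem hfs hft hf0 hf1 hf2 in
lemma TL_surjOn : ∀ w ∈ S, ∃ z ∈ S, f z = w := by
  intro w hw
  rcases (hmem w).1 hw with h | h | h | ⟨m, h⟩ | ⟨m, h⟩ <;> subst h
  · exact ⟨0, (hmem 0).2 (Or.inl rfl), hf0⟩
  · exact ⟨1, (hmem 1).2 (Or.inr (Or.inl rfl)), hf1⟩
  · exact ⟨2, (hmem 2).2 (Or.inr (Or.inr (Or.inl rfl))), hf2⟩
  · exact ⟨s (m-1), (hmem _).2 (Or.inr (Or.inr (Or.inr (Or.inl ⟨m-1, rfl⟩)))),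
      by rw [hfs]; congr 1; omega⟩
  · exact ⟨t (m-1), (hmem _).2 (Or.inr (Or.inr (Or.inr (Or.inr ⟨m-1, rfl⟩)))),
      by rw [hft]; congr 1; omega⟩

end Bij

/-- the two-ladder example: a homeomorphism with the limit shadowing
property but without the shadowing property. -/
theorem two_ladder_example_limit_shadowing_not_shadowing
    (s t : ℤ → ℝ) (hs : StrictMono s) (ht : StrictMono t)
    (hs0 : Tendsto s atBot (nhds 0)) (hs1 : Tendsto s atTop (nhds 1))
    (ht1 : Tendsto t atBot (nhds 1)) (ht2 : Tendsto t atTop (nhds 2))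
    (S : Set ℝ) (hSdef : S = ({0, 1, 2} : Set ℝ) ∪ Set.range s ∪ Set.range t)
    (f : ℝ → ℝ) (hmaps : Set.MapsTo f S S)
    (hf0 : f 0 = 0) (hf1 : f 1 = 1) (hf2 : f 2 = 2)
    (hfs : ∀ n : ℤ, f (s n) = s (n + 1)) (hft : ∀ n : ℤ, f (t n) = t (n + 1)) :
    IsHomeomorph hmaps.restrict ∧
      HasLimitShadowing hmaps.restrict ∧ ¬ HasShadowing hmaps.restrict := by
  set F : S → S := hmaps.restrict with hF
  have hmem : ∀ z : ℝ, z ∈ S ↔ z = 0 ∨ z = 1 ∨ z = 2 ∨ (∃ n, s n = z) ∨ (∃ n, t n = z) := by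
    intro z
    simp [hSdef, Set.mem_union, Set.mem_insert_iff, Set.mem_singleton_iff, Set.mem_range,
      or_assoc]
  have sp : ∀ n, 0 < s n := TL_s_pos hs hs0
  have sl1 : ∀ n, s n < 1 := TL_s_lt_one hs hs1
  have tg1 : ∀ n, 1 < t n := TL_t_gt_one ht ht1
  have tl2 : ∀ n, t n < 2 := TL_t_lt_two ht ht2
  have hSc : IsClosed S := TL_closed hmem hs ht hs0 hs1 ht1 ht2
  have hIcc : S ⊆ Set.Icc (0:ℝ) 2 := TL_sub_Icc hmem hs ht hs0 hs1 ht1 ht2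
  haveI : CompactSpace S :=
    isCompact_iff_compactSpace.1 (IsCompact.of_isClosed_subset isCompact_Icc hSc hIcc)
  have h0S : (0:ℝ) ∈ S := (hmem 0).2 (Or.inl rfl)
  have hsS : ∀ n, s n ∈ S := fun n => (hmem _).2 (Or.inr (Or.inr (Or.inr (Or.inl ⟨n, rfl⟩))))
  have htS : ∀ n, t n ∈ S := fun n => (hmem _).2 (Or.inr (Or.inr (Or.inr (Or.inr ⟨n, rfl⟩))))
  have hiter0 : ∀ i : ℕ, f^[i] (0:ℝ) = 0 := fun i => Function.iterate_fixed hf0 i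
  have hiters : ∀ (i : ℕ) (n : ℤ), f^[i] (s n) = s (n + i) := by
    intro i
    induction i with
    | zero => simp
    | succ i ih =>
      intro n
      rw [Function.iterate_succ_apply, hfs, ih]
      congr 1
      push_cast
      ring
  have hcont : Continuous F := by
    rw [Metric.continuous_iff]
    intro b ε hε
    obtain ⟨δ, hδ, hδ2⟩ := TL_cont_aux hmem hs ht hs0 hs1 ht1 ht2 hf0 hf1 hf2 hfs hft b.2 hε
    refine ⟨δ, hδ, fun a hab => ?_⟩
    rw [Subtype.dist_eq, Real.dist_eq] at hab
    rw [Subtype.dist_eq, Set.MapsTo.val_restrict_apply, Set.MapsTo.val_restrict_apply,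
      Real.dist_eq]
    exact hδ2 a a.2 hab
  refine ⟨?_, ?_, ?_⟩
  · -- homeomorphism
    rw [isHomeomorph_iff_continuous_bijective]
    refine ⟨hcont, ?_, ?_⟩
    · intro a b hab
      have h : f a = f b := by
        have := congrArg Subtype.val hab
        rwa [Set.MapsTo.val_restrict_apply, Set.MapsTo.val_restrict_apply] at this
      exact Subtype.ext (TL_injOn hmem hs ht hs0 hs1 ht1 ht2 hf0 hf1 hf2 hfs hft a a.2 b b.2 h)
    · intro w
      obtain ⟨z, hz, hfz⟩ :=
        TL_surjOn hmem hf0 hf1 hf2 hfs hft w w.2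
      exact ⟨⟨z, hz⟩, Subtype.ext (by rwa [Set.MapsTo.val_restrict_apply])⟩
  · -- limit shadowing
    intro x hx
    have hd : Tendsto (fun i => dist (f ((x i : ℝ))) ((x (i+1) : ℝ))) atTop (nhds 0) := by
      have heq : (fun i => dist (f ((x i : ℝ))) ((x (i+1) : ℝ)))
          = fun i => dist (F (x i)) (x (i+1)) := by
        funext i
        rw [Subtype.dist_eq (F (x i)) (x (i+1)), Set.MapsTo.val_restrict_apply]
      rw [heq]
      exact hx
    obtain ⟨p, hpS, hpf, hpt⟩ := TL_limit_orbit hmem hs ht hs0 hs1 ht1 ht2 hf0 hf1 hf2 hfs hft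
      (fun i => (x i : ℝ)) (fun i => (x i).2) hd
    refine ⟨⟨p, hpS⟩, ?_⟩
    have hfix : ∀ i : ℕ, (F)^[i] ⟨p, hpS⟩ = ⟨p, hpS⟩ := fun i =>
      Function.iterate_fixed (Subtype.ext (by rw [Set.MapsTo.val_restrict_apply]; exact hpf)) i
    unfold LimitShadows
    simp only [hfix, Subtype.dist_eq]
    exact tendsto_iff_dist_tendsto_zero.1 hpt
  · -- not shadowing
    intro hsh
    obtain ⟨δ, hδ, hδ2⟩ := hsh (1/2) (by norm_num)
    obtain ⟨c, hc⟩ := eventually_atBot.1 ((tendsto_order.1 hs0).2 δ hδ)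
    obtain ⟨a₀, ha₀⟩ := eventually_atTop.1 ((tendsto_order.1 hs1).1 (1 - δ/2) (by linarith))
    set a := max a₀ c with haa
    have ha : 1 - δ/2 < s a := ha₀ _ (le_max_left _ _)
    have hca : c ≤ a := le_max_right _ _
    obtain ⟨b, hb⟩ := eventually_atBot.1 ((tendsto_order.1 ht1).2 (1 + δ/2) (by linarith))
    have hbv : t b < 1 + δ/2 := hb b le_rfl
    set K : ℕ := (a - c).toNat with hK
    have hKc : (c : ℤ) + (K : ℤ) = a := by
      have : ((a - c).toNat : ℤ) = a - c := Int.toNat_of_nonneg (by omega)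
      omega
    set v : ℕ → ℝ := fun i =>
      if i = 0 then 0 else if i ≤ K + 1 then s (c + i - 1) else t (b + i - (K + 2)) with hv
    have hv0 : v 0 = 0 := by simp [hv]
    have hvs : ∀ i : ℕ, 1 ≤ i → i ≤ K + 1 → v i = s (c + i - 1) := by
      intro i hi1 hi2
      simp only [hv]
      rw [if_neg (by omega), if_pos hi2]
    have hvt : ∀ i : ℕ, K + 2 ≤ i → v i = t (b + i - (K + 2)) := by
      intro i hi
      simp only [hv]
      rw [if_neg (by omega), if_neg (by omega)]
    have hvS : ∀ i, v i ∈ S := by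
      intro i
      simp only [hv]
      split_ifs
      · exact h0S
      · exact hsS _
      · exact htS _
    set x : ℕ → S := fun i => ⟨v i, hvS i⟩ with hxdef
    have hpseudo : IsPseudoOrbit F δ x := by
      intro i
      rw [Subtype.dist_eq, Set.MapsTo.val_restrict_apply]
      show dist (f (v i)) (v (i+1)) ≤ δ
      rcases Nat.eq_zero_or_pos i with h0 | h1
      · subst h0
        rw [hv0, hvs 1 le_rfl (by omega), hf0]
        have e1 : (c:ℤ) + (1:ℕ) - 1 = c := by push_cast; ring
        rw [e1, Real.dist_eq, zero_sub, abs_neg, abs_of_pos (sp c)]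
        exact (hc c le_rfl).le
      · rcases lt_or_ge i (K+1) with h2 | h2
        · rw [hvs i h1 (by omega), hvs (i+1) (by omega) (by omega), hfs]
          have e1 : (c:ℤ) + i - 1 + 1 = c + (i+1:ℕ) - 1 := by push_cast; ring
          rw [e1, dist_self]
          exact hδ.le
        · rcases Nat.eq_or_lt_of_le h2 with h3 | h3
          · rw [← h3, hvs (K+1) (by omega) le_rfl, hfs, hvt (K+2) le_rfl]
            have e1 : (c:ℤ) + (K+1:ℕ) - 1 + 1 = a + 1 := by push_cast; omega
            have e2 : (b:ℤ) + (K+2:ℕ) - (K+2) = b := by push_cast; ring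
            rw [e1, e2, Real.dist_eq,
              abs_of_nonpos (by linarith [sl1 (a+1), tg1 b])]
            have h4 : s a < s (a+1) := hs (lt_add_one a)
            linarith
          · rw [hvt i (by omega), hvt (i+1) (by omega), hft]
            have e1 : (b:ℤ) + i - (K+2) + 1 = b + (i+1:ℕ) - (K+2) := by push_cast; ring
            rw [e1, dist_self]
            exact hδ.le
    obtain ⟨y, hy⟩ := hδ2 x hpseudo
    have hy0 := hy 0
    rw [Function.iterate_zero_apply, Subtype.dist_eq] at hy0
    have hx0 : ((x 0 : ℝ)) = 0 := hv0
    rw [hx0, Real.dist_eq] at hy0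
    have hyle : (y : ℝ) ≤ 1/2 := by
      have := abs_le.1 hy0
      linarith [this.1]
    have hit : ∀ i : ℕ, ((F)^[i] y : ℝ) < 1 := by
      intro i
      rw [Set.MapsTo.coe_iterate_restrict]
      rcases (hmem _).1 y.2 with h | h | h | ⟨n, h⟩ | ⟨n, h⟩
      · rw [h, hiter0]; norm_num
      · exfalso; rw [h] at hyle; linarith
      · exfalso; rw [h] at hyle; linarith
      · rw [← h, hiters]; exact sl1 _
      · exfalso; rw [← h] at hyle; linarith [tg1 n]
    obtain ⟨m₂, hm₂1, hm₂2⟩ :=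
      (((tendsto_order.1 ht2).1 (7/4) (by norm_num)).and (eventually_ge_atTop b)).exists
    set j : ℕ := (m₂ - b).toNat with hj
    have hjb : (b : ℤ) + (j : ℤ) = m₂ := by
      have : ((m₂ - b).toNat : ℤ) = m₂ - b := Int.toNat_of_nonneg (by omega)
      omega
    have hyi := hy (K + 2 + j)
    rw [Subtype.dist_eq] at hyi
    have hxv : ((x (K + 2 + j) : ℝ)) = t m₂ := by
      show v (K + 2 + j) = t m₂
      rw [hvt _ (by omega)]
      congr 1
      push_cast
      omega
    rw [hxv, Real.dist_eq] at hyi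
    have := hit (K + 2 + j)
    have := abs_le.1 hyi
    linarith [this.1]
end

section
/- In the example X = {0,1,2} ∪ {s_n} ∪ {t_n} with f as above, every limit pseudo orbit (x_i)_{i≥0} of f converges to one of the fixed points 0, 1, or 2. -/
open Filter Topology

variable {X : Type*} [MetricSpace X]

lemma ladder_mem_Ioo {s : ℤ → ℝ} (hs : StrictMono s) {p q : ℝ}
    (h0 : Tendsto s atBot (nhds p)) (h1 : Tendsto s atTop (nhds q)) (n : ℤ) :
    s n ∈ Set.Ioo p q := by
  constructor
  · have h : p ≤ s (n - 1) :=
      le_of_tendsto h0 (eventually_atBot.2 ⟨n - 1, fun m hm => hs.monotone hm⟩)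
    exact lt_of_le_of_lt h (hs (by omega))
  · have h : s (n + 1) ≤ q :=
      ge_of_tendsto h1 (eventually_atTop.2 ⟨n + 1, fun m hm => hs.monotone hm⟩)
    exact lt_of_lt_of_le (hs (by omega)) h

lemma ladder_inter_finite {s : ℤ → ℝ} {p q a b : ℝ}
    (h0 : Tendsto s atBot (nhds p)) (h1 : Tendsto s atTop (nhds q))
    (ha : p < a) (hb : b < q) :
    (Set.range s ∩ Set.Icc a b).Finite := by
  obtain ⟨N0, hN0⟩ := eventually_atBot.1 (h0.eventually (gt_mem_nhds ha))
  obtain ⟨N1, hN1⟩ := eventually_atTop.1 (h1.eventually (lt_mem_nhds hb))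
  refine ((Set.finite_Icc N0 N1).image s).subset ?_
  rintro y ⟨⟨n, rfl⟩, hy⟩
  refine ⟨n, ⟨?_, ?_⟩, rfl⟩
  · by_contra h
    push_neg at h
    exact absurd hy.1 (by linarith [hN0 n (le_of_lt h)])
  · by_contra h
    push_neg at h
    exact absurd hy.2 (by linarith [hN1 n (le_of_lt h)])

section SLemmas

variable {s t : ℤ → ℝ} {S : Set ℝ}
variable (hs : StrictMono s) (ht : StrictMono t)
variable (hs0 : Tendsto s atBot (nhds 0)) (hs1 : Tendsto s atTop (nhds 1))
variable (ht1 : Tendsto t atBot (nhds 1)) (ht2 : Tendsto t atTop (nhds 2))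
variable (hSdef : S = ({0, 1, 2} : Set ℝ) ∪ Set.range s ∪ Set.range t)

include hs ht hs0 hs1 ht1 ht2 hSdef

lemma S_sub_Icc : S ⊆ Set.Icc 0 2 := by
  rw [hSdef]
  rintro y ((h | ⟨n, rfl⟩) | ⟨n, rfl⟩)
  · rcases h with rfl | rfl | rfl <;> norm_num
  · have := ladder_mem_Ioo hs hs0 hs1 n
    constructor <;> [linarith [this.1]; linarith [this.2]]
  · have := ladder_mem_Ioo ht ht1 ht2 n
    constructor <;> [linarith [this.1]; linarith [this.2]]

lemma S_near_finite {y : ℝ} (hy : y ∈ Set.Ioo (0:ℝ) 1 ∪ Set.Ioo (1:ℝ) 2) :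
    ∃ r > 0, (S ∩ Metric.ball y r).Finite := by
  rcases hy with hy | hy
  · set r := min y (1 - y) / 2 with hr_def
    have hr : 0 < r := by
      have : 0 < min y (1 - y) := lt_min hy.1 (by linarith [hy.2])
      positivity
    have hra : r < y := by
      have : r ≤ y / 2 := by
        have := min_le_left y (1 - y); rw [hr_def]; linarith
      linarith [hy.1]
    have hrb : y + r < 1 := by
      have : r ≤ (1 - y) / 2 := by
        have := min_le_right y (1 - y); rw [hr_def]; linarith
      linarith [hy.2]
    refine ⟨r, hr, (ladder_inter_finite hs0 hs1 (a := y - r) (b := y + r)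
      (by linarith) hrb).subset ?_⟩
    rintro z ⟨hzS, hzb⟩
    have hzd : |z - y| < r := by
      rw [Metric.mem_ball, Real.dist_eq] at hzb; exact hzb
    have hzI : z ∈ Set.Icc (y - r) (y + r) := by
      rw [abs_lt] at hzd; constructor <;> linarith [hzd.1, hzd.2]
    refine ⟨?_, hzI⟩
    rw [hSdef] at hzS
    rcases hzS with (h | h) | ⟨n, rfl⟩
    · exfalso
      rcases h with rfl | rfl | rfl
      · linarith [hzI.1]
      · linarith [hzI.2]
      · linarith [hzI.2]
    · exact h
    · exfalso
      have := (ladder_mem_Ioo ht ht1 ht2 n).1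
      linarith [hzI.2]
  · set r := min (y - 1) (2 - y) / 2 with hr_def
    have hr : 0 < r := by
      have : 0 < min (y - 1) (2 - y) := lt_min (by linarith [hy.1]) (by linarith [hy.2])
      positivity
    have hra : y - r > 1 := by
      have : r ≤ (y - 1) / 2 := by
        have := min_le_left (y - 1) (2 - y); rw [hr_def]; linarith
      linarith [hy.1]
    have hrb : y + r < 2 := by
      have : r ≤ (2 - y) / 2 := by
        have := min_le_right (y - 1) (2 - y); rw [hr_def]; linarith
      linarith [hy.2]
    refine ⟨r, hr, (ladder_inter_finite ht1 ht2 (a := y - r) (b := y + r)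
      hra hrb).subset ?_⟩
    rintro z ⟨hzS, hzb⟩
    have hzd : |z - y| < r := by
      rw [Metric.mem_ball, Real.dist_eq] at hzb; exact hzb
    have hzI : z ∈ Set.Icc (y - r) (y + r) := by
      rw [abs_lt] at hzd; constructor <;> linarith [hzd.1, hzd.2]
    refine ⟨?_, hzI⟩
    rw [hSdef] at hzS
    rcases hzS with (h | ⟨n, rfl⟩) | h
    · exfalso
      rcases h with rfl | rfl | rfl
      · linarith [hzI.1]
      · linarith [hzI.1]
      · linarith [hzI.2]
    · exfalso
      have := (ladder_mem_Ioo hs hs0 hs1 n).2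
      linarith [hzI.1]
    · exact h

lemma S_closure : closure S ⊆ S := by
  intro y hy
  have hyIcc : y ∈ Set.Icc (0:ℝ) 2 :=
    closure_minimal (S_sub_Icc hs ht hs0 hs1 ht1 ht2 hSdef) isClosed_Icc hy
  by_cases h012 : y = 0 ∨ y = 1 ∨ y = 2
  · rw [hSdef]
    left; left
    rcases h012 with rfl | rfl | rfl <;> simp
  · push_neg at h012
    have hy' : y ∈ Set.Ioo (0:ℝ) 1 ∪ Set.Ioo (1:ℝ) 2 := by
      rcases lt_or_gt_of_ne h012.2.1 with h | h
      · exact Or.inl ⟨lt_of_le_of_ne hyIcc.1 (Ne.symm h012.1), h⟩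
      · exact Or.inr ⟨h, lt_of_le_of_ne hyIcc.2 h012.2.2⟩
    obtain ⟨r, hr, hF⟩ := S_near_finite hs ht hs0 hs1 ht1 ht2 hSdef hy'
    have hycl : y ∈ closure (S ∩ Metric.ball y r) := by
      rw [Metric.mem_closure_iff]
      intro ε hε
      obtain ⟨z, hzS, hz⟩ := Metric.mem_closure_iff.1 hy (min ε r) (lt_min hε hr)
      refine ⟨z, ⟨hzS, ?_⟩, lt_of_lt_of_le hz (min_le_left _ _)⟩
      rw [Metric.mem_ball, dist_comm]
      exact lt_of_lt_of_le hz (min_le_right _ _)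
    exact (hF.isClosed.closure_subset hycl).1

lemma S_isolated {y : ℝ} (hy' : y ∈ Set.Ioo (0:ℝ) 1 ∪ Set.Ioo (1:ℝ) 2) :
    ∃ r > 0, ∀ z ∈ S, dist z y < r → z = y := by
  obtain ⟨r, hr, hF⟩ := S_near_finite hs ht hs0 hs1 ht1 ht2 hSdef hy'
  have hG : ((S ∩ Metric.ball y r) \ {y}).Finite := hF.diff
  have hyG : y ∉ (S ∩ Metric.ball y r) \ {y} := fun h => h.2 rfl
  obtain ⟨r', hr', hball⟩ :=
    Metric.isOpen_iff.1 hG.isClosed.isOpen_compl y hyG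
  refine ⟨min r r', lt_min hr hr', fun z hz hdz => ?_⟩
  have hz1 : z ∈ Metric.ball y r :=
    Metric.mem_ball.2 (lt_of_lt_of_le hdz (min_le_left _ _))
  have hz2 : z ∈ Metric.ball y r' :=
    Metric.mem_ball.2 (lt_of_lt_of_le hdz (min_le_right _ _))
  by_contra hne
  exact hball hz2 ⟨⟨hz, hz1⟩, hne⟩

end SLemmas

/-- in the two-ladder example, every limit pseudo orbit converges to
one of the fixed points 0, 1, 2. -/
theorem two_ladder_example_limit_pseudo_orbits_converge
    (s t : ℤ → ℝ) (hs : StrictMono s) (ht : StrictMono t)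
    (hs0 : Tendsto s atBot (nhds 0)) (hs1 : Tendsto s atTop (nhds 1))
    (ht1 : Tendsto t atBot (nhds 1)) (ht2 : Tendsto t atTop (nhds 2))
    (S : Set ℝ) (hSdef : S = ({0, 1, 2} : Set ℝ) ∪ Set.range s ∪ Set.range t)
    (f : ℝ → ℝ) (hmaps : Set.MapsTo f S S)
    (hf0 : f 0 = 0) (hf1 : f 1 = 1) (hf2 : f 2 = 2)
    (hfs : ∀ n : ℤ, f (s n) = s (n + 1)) (hft : ∀ n : ℤ, f (t n) = t (n + 1)) :
    ∀ x : ℕ → S, IsLimitPseudoOrbit hmaps.restrict x →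
      ∃ c ∈ ({0, 1, 2} : Set ℝ), Tendsto (fun i => (x i : ℝ)) atTop (nhds c) := by
  intro x hx
  classical
  set u : ℕ → ℝ := fun i => (x i : ℝ) with hu_def
  have huS : ∀ i, u i ∈ S := fun i => (x i).2
  set d : ℕ → ℝ := fun i => |f (u i) - u (i + 1)| with hd_def
  have hd : Tendsto d atTop (nhds 0) := by
    simpa [IsLimitPseudoOrbit, Subtype.dist_eq, Set.MapsTo.val_restrict_apply,
      Real.dist_eq, d, u] using hx
  have hfge : ∀ y ∈ S, y ≤ f y := by
    intro y hy
    rw [hSdef] at hy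
    rcases hy with (h | ⟨n, rfl⟩) | ⟨n, rfl⟩
    · rcases h with rfl | rfl | rfl <;> simp [hf0, hf1, hf2]
    · rw [hfs]; exact le_of_lt (hs (by omega))
    · rw [hft]; exact le_of_lt (ht (by omega))
  have hstep : ∀ i, u i - d i ≤ u (i + 1) := by
    intro i
    have h1 : u i ≤ f (u i) := hfge _ (huS i)
    have h2 : f (u i) - u (i + 1) ≤ d i := le_abs_self _
    linarith
  have hIcc := S_sub_Icc hs ht hs0 hs1 ht1 ht2 hSdef
  have hbddA : IsBoundedUnder (· ≤ ·) atTop u :=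
    isBoundedUnder_of ⟨2, fun i => (hIcc (huS i)).2⟩
  have hbddB : IsBoundedUnder (· ≥ ·) atTop u :=
    isBoundedUnder_of ⟨0, fun i => (hIcc (huS i)).1⟩
  have hScl := S_closure hs ht hs0 hs1 ht1 ht2 hSdef
  set l := liminf u atTop with hl_def
  set L := limsup u atTop with hL_def
  have hlL : l = L := by
    by_contra hne
    have hlt : l < L := lt_of_le_of_ne (liminf_le_limsup hbddA hbddB) hne
    have hSc : S.Countable := by
      rw [hSdef]
      exact (((((Set.finite_singleton (2:ℝ)).insert 1).insert 0).countable.union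
        (Set.countable_range s)).union (Set.countable_range t))
    obtain ⟨c, hcS, hc⟩ : ∃ c ∈ Sᶜ, c ∈ Set.Ioo l L :=
      (hSc.dense_compl ℝ).exists_mem_open isOpen_Ioo (Set.nonempty_Ioo.2 hlt)
    have hccl : c ∈ closure S := by
      rw [Metric.mem_closure_iff]
      intro ε hε
      obtain ⟨N, hN⟩ := eventually_atTop.1 (hd.eventually (gt_mem_nhds (half_pos hε)))
      have hfreq_hi : ∃ᶠ i in atTop, c < u i :=
        frequently_lt_of_lt_limsup hbddB.isCoboundedUnder_le hc.2
      obtain ⟨i, hic, hiN⟩ := (hfreq_hi.and_eventually (eventually_ge_atTop N)).exists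
      have hfreq_lo : ∃ᶠ i in atTop, u i < c :=
        frequently_lt_of_liminf_lt hbddA.isCoboundedUnder_ge hc.1
      have hex : ∃ j, i ≤ j ∧ u j < c := by
        obtain ⟨j, hj1, hj2⟩ := (hfreq_lo.and_eventually (eventually_ge_atTop i)).exists
        exact ⟨j, hj2, hj1⟩
      set j := Nat.find hex with hj_def
      have hji : i ≤ j := (Nat.find_spec hex).1
      have hjc : u j < c := (Nat.find_spec hex).2
      have hjne : j ≠ i := by
        intro h
        rw [h] at hjc
        linarith
      obtain ⟨k, hk⟩ : ∃ k, j = k + 1 := ⟨j - 1, by omega⟩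
      have hki : i ≤ k := by omega
      have hukc : c ≤ u k := by
        by_contra h
        push_neg at h
        exact Nat.find_min hex (by omega) ⟨hki, h⟩
      have hdk : d k < ε / 2 := hN k (le_trans hiN hki)
      have hustep : u k - d k ≤ u j := by rw [hk]; exact hstep k
      refine ⟨u j, huS j, ?_⟩
      rw [Real.dist_eq, abs_of_pos (by linarith)]
      linarith
    exact hcS (hScl hccl)
  have hc0 : Tendsto u atTop (nhds l) :=
    tendsto_of_liminf_eq_limsup rfl hlL.symm hbddA hbddB
  have hc0S : l ∈ S := hScl (mem_closure_of_tendsto hc0 (Eventually.of_forall huS))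
  rw [hSdef] at hc0S
  rcases hc0S with (h3 | ⟨n, hn⟩) | ⟨n, hn⟩
  · exact ⟨l, h3, hc0⟩
  · exfalso
    have hio : l ∈ Set.Ioo (0:ℝ) 1 ∪ Set.Ioo (1:ℝ) 2 :=
      Or.inl (hn ▸ ladder_mem_Ioo hs hs0 hs1 n)
    obtain ⟨r, hr, hiso⟩ := S_isolated hs ht hs0 hs1 ht1 ht2 hSdef hio
    have hev : ∀ᶠ i in atTop, u i = l := by
      filter_upwards [hc0.eventually (Metric.ball_mem_nhds l hr)] with i hi
      exact hiso _ (huS i) hi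
    have hgap : 0 < s (n + 1) - s n := sub_pos.2 (hs (by omega))
    obtain ⟨I, hI⟩ := eventually_atTop.1 hev
    obtain ⟨J, hJ⟩ := eventually_atTop.1 (hd.eventually (gt_mem_nhds hgap))
    set i := max I J with hi_def
    have h1 : u i = l := hI _ (le_max_left _ _)
    have h2 : u (i + 1) = l := hI _ (le_trans (le_max_left _ _) (Nat.le_succ _))
    have h3 : d i < s (n + 1) - s n := hJ _ (le_max_right _ _)
    have hdi : d i = s (n + 1) - s n := by
      have hfl : f (u i) = s (n + 1) := by rw [h1, ← hn, hfs]
      rw [hd_def]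
      simp only [hfl, h2, ← hn]
      exact abs_of_pos hgap
    linarith
  · exfalso
    have hio : l ∈ Set.Ioo (0:ℝ) 1 ∪ Set.Ioo (1:ℝ) 2 :=
      Or.inr (hn ▸ ladder_mem_Ioo ht ht1 ht2 n)
    obtain ⟨r, hr, hiso⟩ := S_isolated hs ht hs0 hs1 ht1 ht2 hSdef hio
    have hev : ∀ᶠ i in atTop, u i = l := by
      filter_upwards [hc0.eventually (Metric.ball_mem_nhds l hr)] with i hi
      exact hiso _ (huS i) hi
    have hgap : 0 < t (n + 1) - t n := sub_pos.2 (ht (by omega))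
    obtain ⟨I, hI⟩ := eventually_atTop.1 hev
    obtain ⟨J, hJ⟩ := eventually_atTop.1 (hd.eventually (gt_mem_nhds hgap))
    set i := max I J with hi_def
    have h1 : u i = l := hI _ (le_max_left _ _)
    have h2 : u (i + 1) = l := hI _ (le_trans (le_max_left _ _) (Nat.le_succ _))
    have h3 : d i < t (n + 1) - t n := hJ _ (le_max_right _ _)
    have hdi : d i = t (n + 1) - t n := by
      have hfl : f (u i) = t (n + 1) := by rw [h1, ← hn, hft]
      rw [hd_def]
      simp only [hfl, h2, ← hn]
      exact abs_of_pos hgap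
    linarith
end

section
/- Let h : Y → Y be a continuous self-map of a compact metric space and h^ℕ : Y^ℕ → Y^ℕ the countable direct product (with a compatible product metric). Then h^ℕ has the shadowing property if and only if h does, and h^ℕ has the limit shadowing property if and only if h does. -/
open Filter Topology

variable {X : Type*} [MetricSpace X]

/-- shadowing with respect to an abstract distance function. -/
def ShadowD {A : Type*} (ρ : A → A → ℝ) (f : A → A) : Prop :=
  ∀ ε > 0, ∃ δ > 0, ∀ x : ℕ → A, (∀ i, ρ (f (x i)) (x (i + 1)) ≤ δ) →
    ∃ y, ∀ i, ρ (x i) (f^[i] y) ≤ ε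

/-- limit shadowing with respect to an abstract distance function. -/
def LimitShadowD {A : Type*} (ρ : A → A → ℝ) (f : A → A) : Prop :=
  ∀ x : ℕ → A, Tendsto (fun i => ρ (f (x i)) (x (i + 1))) atTop (nhds 0) →
    ∃ y, Tendsto (fun i => ρ (x i) (f^[i] y)) atTop (nhds 0)

section AuxHelpers

variable {Z : Type*} [MetricSpace Z]

lemma prod_iterate (h : Z → Z) (i : ℕ) (y : ℕ → Z) (k : ℕ) :
    (fun y k => h (y k))^[i] y k = h^[i] (y k) := by
  induction i generalizing y with
  | zero => rfl
  | succ n ih =>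
      rw [Function.iterate_succ_apply, Function.iterate_succ_apply]
      exact ih _

lemma aux_min_tendsto {d : ℕ → ℝ} (h : Tendsto (fun i => min (d i) 1) atTop (nhds 0)) :
    Tendsto d atTop (nhds 0) := by
  refine h.congr' ?_
  filter_upwards [h.eventually (Iio_mem_nhds one_pos)] with i hi
  have hd : d i < 1 := by
    by_contra hcon
    push_neg at hcon
    simp [min_eq_right hcon] at hi
  simp [min_eq_left hd.le]

lemma aux_sup_tendsto {t : ℕ → ℕ → ℝ} (h0 : ∀ k i, 0 ≤ t k i)
    (hb : ∀ k i, t k i ≤ (2:ℝ)⁻¹ ^ k)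
    (hk : ∀ k, Tendsto (fun i => t k i) atTop (nhds 0)) :
    Tendsto (fun i => ⨆ k, t k i) atTop (nhds 0) := by
  rw [Metric.tendsto_atTop]
  intro ε εpos
  obtain ⟨M, hM⟩ : ∃ M : ℕ, (2:ℝ)⁻¹ ^ M < ε / 2 :=
    exists_pow_lt_of_lt_one (by positivity) (by norm_num)
  have hev : ∀ᶠ i in atTop, ∀ k ∈ Finset.range M, t k i < ε / 2 := by
    rw [Filter.eventually_all_finset]
    intro k _
    exact (hk k).eventually (Iio_mem_nhds (by positivity))
  obtain ⟨N, hN⟩ := Filter.eventually_atTop.mp hev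
  refine ⟨N, fun n hn => ?_⟩
  have hbdd : BddAbove (Set.range fun k => t k n) := by
    refine ⟨1, ?_⟩
    rintro _ ⟨k, rfl⟩
    exact le_trans (hb k n) (pow_le_one₀ (by norm_num) (by norm_num))
  have hsup : (⨆ k, t k n) ≤ ε / 2 := by
    refine ciSup_le fun k => ?_
    by_cases hkM : k < M
    · exact (hN n hn k (Finset.mem_range.mpr hkM)).le
    · refine le_trans (hb k n) (le_trans ?_ hM.le)
      exact pow_le_pow_of_le_one (by norm_num) (by norm_num) (le_of_not_gt hkM)
  have hnn : 0 ≤ ⨆ k, t k n := le_trans (h0 0 n) (le_ciSup hbdd 0)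
  rw [Real.dist_eq, sub_zero, abs_of_nonneg hnn]
  linarith

end AuxHelpers


/-- the countable direct product `h^ℕ` has the (limit) shadowing
property iff `h` does. -/

theorem product_shadowing_iff
    {Y : Type*} [MetricSpace Y] [CompactSpace Y]
    (h : Y → Y) (hh : Continuous h)
    (D : (ℕ → Y) → (ℕ → Y) → ℝ)
    (hD : ∀ y z : ℕ → Y, D y z = ⨆ k : ℕ, (2 : ℝ)⁻¹ ^ k * min (dist (y k) (z k)) 1) :
    (ShadowD D (fun y k => h (y k)) ↔ ShadowD (fun a b : Y => dist a b) h) ∧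
      (LimitShadowD D (fun y k => h (y k)) ↔
        LimitShadowD (fun a b : Y => dist a b) h) := by
  have hDle : ∀ (y z : ℕ → Y) (c : ℝ),
      (∀ k, (2:ℝ)⁻¹ ^ k * min (dist (y k) (z k)) 1 ≤ c) → D y z ≤ c := by
    intro y z c hc
    rw [hD]
    exact ciSup_le hc
  have hterm1 : ∀ (a : ℝ) (k : ℕ), (2:ℝ)⁻¹ ^ k * min a 1 ≤ min a 1 → True := fun _ _ _ => trivial
  have hDle' : ∀ (y z : ℕ → Y) (c : ℝ),
      (∀ k, min (dist (y k) (z k)) 1 ≤ c) → D y z ≤ c := by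
    intro y z c hc
    refine hDle y z c fun k => le_trans ?_ (hc k)
    exact mul_le_of_le_one_left (le_min dist_nonneg zero_le_one)
      (pow_le_one₀ (by norm_num) (by norm_num))
  have hDge : ∀ (y z : ℕ → Y) (k : ℕ),
      (2:ℝ)⁻¹ ^ k * min (dist (y k) (z k)) 1 ≤ D y z := by
    intro y z k
    rw [hD]
    refine le_ciSup (f := fun k => (2:ℝ)⁻¹ ^ k * min (dist (y k) (z k)) 1) ⟨1, ?_⟩ k
    rintro _ ⟨j, rfl⟩
    have h1 : (2:ℝ)⁻¹ ^ j ≤ 1 := pow_le_one₀ (by norm_num) (by norm_num)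
    have h2 : min (dist (y j) (z j)) 1 ≤ 1 := min_le_right _ _
    have h3 : (0:ℝ) ≤ min (dist (y j) (z j)) 1 := le_min dist_nonneg zero_le_one
    nlinarith
  constructor
  · -- shadowing iff
    constructor
    · -- product shadowing → base shadowing
      intro Hp ε εpos
      have ε2 : (0:ℝ) < min ε 2⁻¹ := lt_min εpos (by norm_num)
      obtain ⟨δ, δpos, hδ⟩ := Hp (min ε 2⁻¹) ε2
      refine ⟨δ, δpos, fun x hx => ?_⟩
      obtain ⟨Yp, hYp⟩ := hδ (fun i _ => x i)
        (fun i => hDle' _ _ δ fun k => le_trans (min_le_left _ _) (hx i))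
      refine ⟨Yp 0, fun i => ?_⟩
      have h0 := le_trans (hDge (fun _ => x i) ((fun y k => h (y k))^[i] Yp) 0) (hYp i)
      rw [pow_zero, one_mul, prod_iterate] at h0
      rcases min_le_iff.mp h0 with h' | h'
      · exact le_trans h' (min_le_left _ _)
      · have : (1:ℝ) ≤ 2⁻¹ := le_trans h' (min_le_right _ _)
        norm_num at this
    · -- base shadowing → product shadowing
      intro Hb ε εpos
      obtain ⟨δ, δpos, hδ⟩ := Hb ε εpos
      obtain ⟨N, hN⟩ : ∃ N : ℕ, (2:ℝ)⁻¹ ^ N < ε :=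
        exists_pow_lt_of_lt_one εpos (by norm_num)
      set δ' := min δ 2⁻¹ with hδ'def
      have δ'pos : 0 < δ' := lt_min δpos (by norm_num)
      refine ⟨(2:ℝ)⁻¹ ^ N * δ', by positivity, fun x hx => ?_⟩
      have key : ∀ k, ∃ y : Y, k < N → ∀ i, dist (x i k) (h^[i] y) ≤ ε := by
        intro k
        by_cases hk : k < N
        · have hco : ∀ i, dist (h (x i k)) (x (i + 1) k) ≤ δ := by
            intro i
            have h1 : (2:ℝ)⁻¹ ^ k * min (dist (h (x i k)) (x (i + 1) k)) 1 ≤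
                (2:ℝ)⁻¹ ^ N * δ' :=
              le_trans (hDge ((fun y k => h (y k)) (x i)) (x (i + 1)) k) (hx i)
            have hpk : (0:ℝ) < 2⁻¹ ^ k := by positivity
            have hmono : (2:ℝ)⁻¹ ^ N ≤ 2⁻¹ ^ k :=
              pow_le_pow_of_le_one (by norm_num) (by norm_num) hk.le
            have hmin : min (dist (h (x i k)) (x (i + 1) k)) 1 ≤ δ' := by
              nlinarith [δ'pos.le]
            rcases min_le_iff.mp hmin with h' | h'
            · exact le_trans h' (min_le_left _ _)
            · have : (1:ℝ) ≤ 2⁻¹ := le_trans h' (min_le_right _ _)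
              norm_num at this
          obtain ⟨y, hy⟩ := hδ (fun i => x i k) hco
          exact ⟨y, fun _ => hy⟩
        · exact ⟨x 0 k, fun hc => absurd hc hk⟩
      choose Yp hYp using key
      refine ⟨Yp, fun i => hDle _ _ ε fun k => ?_⟩
      rw [prod_iterate]
      by_cases hk : k < N
      · have h1 : min (dist (x i k) (h^[i] (Yp k))) 1 ≤ ε :=
          le_trans (min_le_left _ _) (hYp k hk i)
        exact le_trans (mul_le_of_le_one_left (le_min dist_nonneg zero_le_one)
          (pow_le_one₀ (by norm_num) (by norm_num))) h1
      · have hmono : (2:ℝ)⁻¹ ^ k ≤ 2⁻¹ ^ N :=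
          pow_le_pow_of_le_one (by norm_num) (by norm_num) (le_of_not_gt hk)
        have hm : min (dist (x i k) (h^[i] (Yp k))) 1 ≤ 1 := min_le_right _ _
        have h3 : (0:ℝ) ≤ min (dist (x i k) (h^[i] (Yp k))) 1 :=
          le_min dist_nonneg zero_le_one
        nlinarith
  · -- limit shadowing iff
    constructor
    · -- product limit shadowing → base limit shadowing
      intro Hp x hx
      have hxm : Tendsto (fun i => min (dist (h (x i)) (x (i + 1))) 1) atTop (nhds 0) :=
        squeeze_zero (fun i => le_min dist_nonneg zero_le_one)
          (fun i => min_le_left _ _) hx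
      have hDt : Tendsto
          (fun i => D ((fun y k => h (y k)) (fun _ => x i)) (fun _ => x (i + 1)))
          atTop (nhds 0) := by
        refine squeeze_zero (fun i => ?_) (fun i => ?_) hxm
        · refine le_trans ?_ (hDge ((fun y k => h (y k)) (fun _ => x i)) (fun _ => x (i + 1)) 0)
          positivity
        · exact hDle' _ _ _ fun k => le_refl _
      obtain ⟨Yp, hYp⟩ := Hp (fun i _ => x i) hDt
      refine ⟨Yp 0, aux_min_tendsto ?_⟩
      refine squeeze_zero (fun i => le_min dist_nonneg zero_le_one) (fun i => ?_) hYp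
      have h0 := hDge (fun _ => x i) ((fun y k => h (y k))^[i] Yp) 0
      rw [pow_zero, one_mul, prod_iterate] at h0
      exact h0
    · -- base limit shadowing → product limit shadowing
      intro Hb x hx
      have hco : ∀ k, Tendsto (fun i => dist (h (x i k)) (x (i + 1) k)) atTop (nhds 0) := by
        intro k
        refine aux_min_tendsto ?_
        have h2 : Tendsto (fun i => (2:ℝ) ^ k * D ((fun y k => h (y k)) (x i)) (x (i + 1)))
            atTop (nhds 0) := by
          simpa using hx.const_mul ((2:ℝ) ^ k)
        refine squeeze_zero (fun i => le_min dist_nonneg zero_le_one) (fun i => ?_) h2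
        have h1 : (2:ℝ)⁻¹ ^ k * min (dist (h (x i k)) (x (i + 1) k)) 1 ≤
            D ((fun y k => h (y k)) (x i)) (x (i + 1)) :=
          hDge ((fun y k => h (y k)) (x i)) (x (i + 1)) k
        have hpow : (2:ℝ) ^ k * (2:ℝ)⁻¹ ^ k = 1 := by
          rw [← mul_pow]; norm_num
        have hmul := mul_le_mul_of_nonneg_left h1 (by positivity : (0:ℝ) ≤ 2 ^ k)
        calc min (dist (h (x i k)) (x (i + 1) k)) 1
            = (2:ℝ) ^ k * ((2:ℝ)⁻¹ ^ k * min (dist (h (x i k)) (x (i + 1) k)) 1) := by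
              rw [← mul_assoc, hpow, one_mul]
          _ ≤ (2:ℝ) ^ k * D ((fun y k => h (y k)) (x i)) (x (i + 1)) := hmul
      choose Yp hYp using fun k => Hb (fun i => x i k) (hco k)
      refine ⟨Yp, ?_⟩
      have heq : (fun i => D (x i) ((fun y k => h (y k))^[i] Yp)) =
          fun i => ⨆ k, (2:ℝ)⁻¹ ^ k * min (dist (x i k) (h^[i] (Yp k))) 1 := by
        funext i
        rw [hD]
        simp only [prod_iterate]
      rw [heq]
      refine aux_sup_tendsto
        (fun k i => mul_nonneg (by positivity) (le_min dist_nonneg zero_le_one))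
        (fun k i => mul_le_of_le_one_right (by positivity) (min_le_right _ _))
        (fun k => ?_)
      have hm : Tendsto (fun i => min (dist (x i k) (h^[i] (Yp k))) 1) atTop (nhds 0) :=
        squeeze_zero (fun i => le_min dist_nonneg zero_le_one)
          (fun i => min_le_left _ _) (hYp k)
      simpa using hm.const_mul ((2:ℝ)⁻¹ ^ k)
end

section
/- Let g : X_m → X_m be an odometer with periodic structure m = (m_k), with metric d(x,y) = sup_k 2^{-k} δ(x_k,y_k). Let X = {p} ⊔ X_m with d(p,x) > 1 for all x ∈ X_m, and define f : X → X by f(p) = (0,0,0,...) and f = g on X_m. Then f is an equicontinuous map with the shadowing property that does not have the s-limit shadowing property. -/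
open Filter Topology

variable {X : Type*} [MetricSpace X]

/-- equicontinuity with respect to an abstract distance function. -/
def EquicontD {A : Type*} (ρ : A → A → ℝ) (f : A → A) : Prop :=
  ∀ ε > 0, ∃ δ > 0, ∀ x y : A, ρ x y ≤ δ → ∀ n, ρ (f^[n] x) (f^[n] y) ≤ ε

/-- s-limit shadowing with respect to an abstract distance function. -/
def SLimitShadowD {A : Type*} (ρ : A → A → ℝ) (f : A → A) : Prop :=
  ∀ ε > 0, ∃ δ > 0,
    (∀ x : ℕ → A, (∀ i, ρ (f (x i)) (x (i + 1)) ≤ δ) →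
      ∃ y, ∀ i, ρ (x i) (f^[i] y) ≤ ε) ∧
    (∀ x : ℕ → A, (∀ i, ρ (f (x i)) (x (i + 1)) ≤ δ) →
      Tendsto (fun i => ρ (f (x i)) (x (i + 1))) atTop (nhds 0) →
      ∃ y, (∀ i, ρ (x i) (f^[i] y) ≤ ε) ∧
        Tendsto (fun i => ρ (x i) (f^[i] y)) atTop (nhds 0))

private lemma bddD (u v : ℕ → ℕ) :
    BddAbove (Set.range fun k : ℕ => (2:ℝ)⁻¹ ^ (k+1) * (if u k = v k then 0 else 1)) := by
  refine ⟨1, ?_⟩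
  rintro r ⟨k, rfl⟩
  have h1 : (2:ℝ)⁻¹ ^ (k+1) ≤ 1 := pow_le_one₀ (by norm_num) (by norm_num)
  have h0 : (0:ℝ) ≤ (2:ℝ)⁻¹ ^ (k+1) := by positivity
  dsimp only
  split <;> linarith

private lemma D_le_one (u v : ℕ → ℕ) :
    (⨆ k : ℕ, (2:ℝ)⁻¹ ^ (k+1) * (if u k = v k then 0 else 1)) ≤ 1 := by
  apply ciSup_le
  intro k
  have h1 : (2:ℝ)⁻¹ ^ (k+1) ≤ 1 := pow_le_one₀ (by norm_num) (by norm_num)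
  have h0 : (0:ℝ) ≤ (2:ℝ)⁻¹ ^ (k+1) := by positivity
  split <;> linarith

private lemma D_le_agree (u v : ℕ → ℕ) (N : ℕ) (h : ∀ k ≤ N, u k = v k) :
    (⨆ k : ℕ, (2:ℝ)⁻¹ ^ (k+1) * (if u k = v k then 0 else 1)) ≤ (2:ℝ)⁻¹ ^ (N+2) := by
  apply ciSup_le
  intro k
  by_cases hk : k ≤ N
  · simp only [h k hk, if_pos, mul_zero]
    positivity
  · have hle : (2:ℝ)⁻¹^(k+1) ≤ (2:ℝ)⁻¹^(N+2) :=
      pow_le_pow_of_le_one (by norm_num) (by norm_num) (by omega)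
    have h0 : (0:ℝ) ≤ (2:ℝ)⁻¹ ^ (N+2) := by positivity
    split
    · simpa using h0
    · simpa using hle

private lemma D_lb (u v : ℕ → ℕ) (k : ℕ) (h : u k ≠ v k) :
    (2:ℝ)⁻¹ ^ (k+1) ≤ ⨆ k : ℕ, (2:ℝ)⁻¹ ^ (k+1) * (if u k = v k then 0 else 1) := by
  have := le_ciSup (bddD u v) k
  simpa [h] using this

private lemma D_zero (u v : ℕ → ℕ) (h : ∀ k, u k = v k) :
    (⨆ k : ℕ, (2:ℝ)⁻¹ ^ (k+1) * (if u k = v k then 0 else 1)) = 0 := by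
  simp [h]

/-- an odometer extended by one extra point `p` mapping onto the zero
point: equicontinuous, has shadowing, but fails s-limit shadowing. -/
theorem odometer_with_extra_point_not_s_limit_shadowing
    (m : ℕ → ℕ) (hm1 : 2 ≤ m 0) (hmono : StrictMono m) (hdvd : ∀ k, m k ∣ m (k + 1))
    (Xm : Set (ℕ → ℕ)) (hXm : Xm = {x | ∀ k, x k < m k ∧ x (k + 1) % m k = x k})
    (g : (ℕ → ℕ) → (ℕ → ℕ)) (hg : g = fun x k => (x k + 1) % m k)
    (hgm : Set.MapsTo g Xm Xm) (h0 : (fun _ => 0) ∈ Xm)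
    (f : Option Xm → Option Xm)
    (hfp : f none = some ⟨fun _ => 0, h0⟩)
    (hfg : ∀ x : Xm, f (some x) = some ⟨g x, hgm x.2⟩)
    (ρ : Option Xm → Option Xm → ℝ)
    (hρ : ∀ a b : Option Xm, ρ a b =
      match a, b with
      | none, none => 0
      | some x, some y =>
          ⨆ k : ℕ, (2 : ℝ)⁻¹ ^ (k + 1) *
            (if (x : ℕ → ℕ) k = (y : ℕ → ℕ) k then 0 else 1)
      | _, _ => 2) :
    EquicontD ρ f ∧ ShadowD ρ f ∧ ¬ SLimitShadowD ρ f := by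
  -- basic facts
  have hm2 : ∀ k, 2 ≤ m k := fun k => hm1.trans (hmono.monotone (Nat.zero_le k))
  have hmpos : ∀ k, 0 < m k := fun k => by have := hm2 k; omega
  have hdvd' : ∀ j k, j ≤ k → m j ∣ m k := by
    intro j k hjk
    induction hjk with
    | refl => exact dvd_rfl
    | step _ ih => exact ih.trans (hdvd _)
  have hzmem : ∀ n : ℕ, (fun k => n % m k) ∈ Xm := by
    intro n
    rw [hXm]
    intro k
    exact ⟨Nat.mod_lt _ (hmpos k), Nat.mod_mod_of_dvd n (hdvd k)⟩
  let z : ℕ → Xm := fun n => ⟨fun k => n % m k, hzmem n⟩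
  have hzco : ∀ n k, (z n : ℕ → ℕ) k = n % m k := fun n k => rfl
  -- ρ computation rules
  have hρnn : ρ none none = 0 := hρ _ _
  have hρns : ∀ v : Xm, ρ none (some v) = 2 := fun v => hρ _ _
  have hρsn : ∀ u : Xm, ρ (some u) none = 2 := fun u => hρ _ _
  have hρss : ∀ u v : Xm, ρ (some u) (some v) =
      ⨆ k : ℕ, (2:ℝ)⁻¹ ^ (k+1) * (if (u : ℕ → ℕ) k = (v : ℕ → ℕ) k then 0 else 1) :=
    fun u v => hρ _ _
  have hρrefl : ∀ a : Option Xm, ρ a a = 0 := by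
    intro a
    cases a with
    | none => exact hρnn
    | some u => rw [hρss]; exact D_zero _ _ fun k => rfl
  -- orbit formulas
  have hz0 : f none = some (z 0) := by
    rw [hfp]
    exact congrArg some (Subtype.ext (funext fun k => (Nat.zero_mod (m k)).symm))
  have hgz : ∀ n, f (some (z n)) = some (z (n+1)) := by
    intro n
    rw [hfg]
    refine congrArg some (Subtype.ext (funext fun k => ?_))
    show g (fun k => n % m k) k = (n+1) % m k
    rw [hg]
    exact Nat.mod_add_mod n (m k) 1
  have horb : ∀ i n, f^[i] (some (z n)) = some (z (n+i)) := by
    intro i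
    induction i with
    | zero => intro n; simp
    | succ i ih =>
      intro n
      rw [Function.iterate_succ_apply, hgz, ih, show n + 1 + i = n + (i+1) from by omega]
  have hnone : ∀ i, f^[i+1] none = some (z i) := by
    intro i
    rw [Function.iterate_succ_apply, hz0, horb, Nat.zero_add]
  -- one-step contraction of ρ
  have hstep : ∀ a b, ρ (f a) (f b) ≤ ρ a b := by
    intro a b
    cases a with
    | none =>
      cases b with
      | none => rw [hρrefl, hρnn]
      | some v =>
        rw [hz0, hfg, hρss, hρns]
        exact (D_le_one _ _).trans (by norm_num)
    | some u =>
      cases b with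
      | none =>
        rw [hz0, hfg, hρss, hρsn]
        exact (D_le_one _ _).trans (by norm_num)
      | some v =>
        rw [hfg, hfg, hρss, hρss]
        apply ciSup_mono (bddD _ _)
        intro k
        show (2:ℝ)⁻¹ ^ (k+1) * (if g (u:ℕ→ℕ) k = g (v:ℕ→ℕ) k then 0 else 1) ≤
          (2:ℝ)⁻¹ ^ (k+1) * (if (u:ℕ→ℕ) k = (v:ℕ→ℕ) k then 0 else 1)
        have h0 : (0:ℝ) ≤ (2:ℝ)⁻¹ ^ (k+1) := by positivity
        by_cases hk : (u:ℕ→ℕ) k = (v:ℕ→ℕ) k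
        · have : g (u:ℕ→ℕ) k = g (v:ℕ→ℕ) k := by rw [hg]; simp only []; rw [hk]
          simp [this, hk]
        · rw [if_neg hk, mul_one]
          split
          · simpa using h0
          · simpa using le_refl ((2:ℝ)⁻¹ ^ (k+1))
  have hiter : ∀ n (a b : Option Xm), ρ (f^[n] a) (f^[n] b) ≤ ρ a b := by
    intro n
    induction n with
    | zero => intro a b; simp
    | succ n ih =>
      intro a b
      rw [Function.iterate_succ_apply, Function.iterate_succ_apply]
      exact (ih _ _).trans (hstep a b)
  refine ⟨?_, ?_, ?_⟩
  · -- equicontinuity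
    intro ε hε
    exact ⟨ε, hε, fun x y hxy n => (hiter n x y).trans hxy⟩
  · -- shadowing
    intro ε hε
    obtain ⟨N, hN⟩ : ∃ N : ℕ, (2:ℝ)⁻¹ ^ (N+2) ≤ ε := by
      obtain ⟨n, hn⟩ := exists_pow_lt_of_lt_one hε (by norm_num : (2:ℝ)⁻¹ < 1)
      exact ⟨n, le_of_lt (lt_of_le_of_lt
        (pow_le_pow_of_le_one (by norm_num) (by norm_num) (by omega)) hn)⟩
    refine ⟨(2:ℝ)⁻¹ ^ (N+2), by positivity, ?_⟩
    intro x hx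
    have hclose : ∀ (a : Xm) (b : Option Xm), ρ (some a) b ≤ (2:ℝ)⁻¹ ^ (N+2) →
        ∃ w : Xm, b = some w ∧ ∀ k ≤ N, (a:ℕ→ℕ) k = (w:ℕ→ℕ) k := by
      intro a b hab
      cases b with
      | none =>
        rw [hρsn] at hab
        have : (2:ℝ)⁻¹ ^ (N+2) ≤ 1 := pow_le_one₀ (by norm_num) (by norm_num)
        linarith
      | some w =>
        refine ⟨w, rfl, fun k hk => ?_⟩
        by_contra hne
        have h1 := D_lb (a:ℕ→ℕ) (w:ℕ→ℕ) k hne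
        rw [hρss] at hab
        have h2 : (2:ℝ)⁻¹ ^ (N+2) < (2:ℝ)⁻¹ ^ (k+1) :=
          pow_lt_pow_right_of_lt_one₀ (by norm_num) (by norm_num) (by omega)
        linarith
    have main : ∀ i, (x i = none ∧ f^[i] (x 0) = none) ∨
        ∃ u v : Xm, x i = some u ∧ f^[i] (x 0) = some v ∧
          ∀ k ≤ N, (u:ℕ→ℕ) k = (v:ℕ→ℕ) k := by
      intro i
      induction i with
      | zero =>
        cases h0x : x 0 with
        | none => exact Or.inl ⟨rfl, by simp⟩
        | some u => exact Or.inr ⟨u, u, rfl, by simp, fun k _ => rfl⟩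
      | succ i ih =>
        have hiρ := hx i
        rcases ih with ⟨h1, h2⟩ | ⟨u, v, h1, h2, h3⟩
        · rw [h1, hz0] at hiρ
          obtain ⟨w, hw1, hw2⟩ := hclose _ _ hiρ
          refine Or.inr ⟨w, z 0, hw1, ?_, fun k hk => (hw2 k hk).symm⟩
          rw [Function.iterate_succ_apply', h2, hz0]
        · rw [h1, hfg] at hiρ
          obtain ⟨w, hw1, hw2⟩ := hclose _ _ hiρ
          refine Or.inr ⟨w, ⟨g v, hgm v.2⟩, hw1, ?_, fun k hk => ?_⟩
          · rw [Function.iterate_succ_apply', h2, hfg]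
          · have ha : (w:ℕ→ℕ) k = g (u:ℕ→ℕ) k := (hw2 k hk).symm
            have hb : g (u:ℕ→ℕ) k = g (v:ℕ→ℕ) k := by
              rw [hg]; simp only []; rw [h3 k hk]
            exact ha.trans hb
    refine ⟨x 0, fun i => ?_⟩
    rcases main i with ⟨h1, h2⟩ | ⟨u, v, h1, h2, h3⟩
    · rw [h1, h2, hρnn]; linarith
    · rw [h1, h2, hρss]
      exact (D_le_agree _ _ N h3).trans hN
  · -- not s-limit shadowing
    intro hs
    obtain ⟨δ, hδ, _, h2⟩ := hs 1 one_pos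
    obtain ⟨K, hK⟩ : ∃ K : ℕ, (2:ℝ)⁻¹ ^ (K+2) ≤ δ := by
      obtain ⟨n, hn⟩ := exists_pow_lt_of_lt_one hδ (by norm_num : (2:ℝ)⁻¹ < 1)
      exact ⟨n, le_of_lt (lt_of_le_of_lt
        (pow_le_pow_of_le_one (by norm_num) (by norm_num) (by omega)) hn)⟩
    set ψ : ℕ → Option Xm := fun i => match i with
      | 0 => none
      | Nat.succ j => some (z (j + m K)) with hψdef
    have hψ0 : ψ 0 = none := rfl
    have hψs : ∀ j, ψ (j+1) = some (z (j + m K)) := fun j => rfl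
    have hpo : ∀ i, ρ (f (ψ i)) (ψ (i+1)) ≤ δ := by
      intro i
      cases i with
      | zero =>
        rw [hψ0, hz0, hψs, hρss]
        refine le_trans (D_le_agree _ _ K ?_) hK
        intro k hk
        rw [hzco, hzco, Nat.zero_mod, Nat.zero_add]
        obtain ⟨c, hc⟩ := hdvd' k K hk
        rw [hc]
        exact (Nat.mul_mod_right _ _).symm
      | succ j =>
        rw [hψs, hgz, show j + m K + 1 = (j+1) + m K from by omega, hψs, hρrefl]
        exact hδ.le
    have hlim : Tendsto (fun i => ρ (f (ψ i)) (ψ (i+1))) atTop (nhds 0) := by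
      have hev : (fun _ => (0:ℝ)) =ᶠ[atTop] (fun i => ρ (f (ψ i)) (ψ (i+1))) := by
        filter_upwards [eventually_ge_atTop 1] with i hi
        obtain ⟨j, rfl⟩ : ∃ j, i = j + 1 := ⟨i - 1, by omega⟩
        rw [hψs, hgz, show j + m K + 1 = (j+1) + m K from by omega, hψs, hρrefl]
      exact Tendsto.congr' hev tendsto_const_nhds
    obtain ⟨y, hy1, hy2⟩ := h2 ψ hpo hlim
    have hyn : y = none := by
      cases y with
      | none => rfl
      | some v =>
        have := hy1 0
        rw [hψ0, Function.iterate_zero_apply, hρns] at this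
        linarith
    subst hyn
    have hev := hy2.eventually (gt_mem_nhds (show (0:ℝ) < (2:ℝ)⁻¹ ^ (K+2) by positivity))
    obtain ⟨i, hlt, hi2⟩ := (hev.and (eventually_ge_atTop 2)).exists
    obtain ⟨j, rfl⟩ : ∃ j, i = j + 2 := ⟨i - 2, by omega⟩
    have hA : ψ (j+2) = some (z ((j+1) + m K)) := hψs (j+1)
    have hB : f^[j+2] none = some (z (j+1)) := hnone (j+1)
    rw [hA, hB, hρss] at hlt
    have hne : (z ((j+1) + m K) : ℕ → ℕ) (K+1) ≠ (z (j+1) : ℕ → ℕ) (K+1) := by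
      rw [hzco, hzco]
      intro hEq
      have hmod : (j+1) + m K ≡ (j+1) + 0 [MOD m (K+1)] := by
        rw [Nat.add_zero]; exact hEq
      have hz' : m K ≡ 0 [MOD m (K+1)] := Nat.ModEq.add_left_cancel' (j+1) hmod
      have hdvd2 : m (K+1) ∣ m K := (Nat.modEq_zero_iff_dvd).mp hz'
      have hle := Nat.le_of_dvd (by have := hm2 K; omega) hdvd2
      have hlt' : m K < m (K+1) := hmono (by omega)
      omega
    have hbig := D_lb _ _ (K+1) hne
    rw [show (K+1)+1 = K+2 from by omega] at hbig
    linarith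
end

section
/- Let f be an equicontinuous continuous self-map of a compact metric space X with the shadowing property. Then the restriction of f to Ω(f) has the limit shadowing property, and consequently f itself has the limit shadowing property. -/
open Filter Topology

variable {X : Type*} [MetricSpace X]

lemma tendsto_zero_iff_aux {u : ℕ → ℝ} (h : ∀ n, 0 ≤ u n) :
    Tendsto u atTop (nhds 0) ↔ ∀ ε > 0, ∃ N, ∀ n ≥ N, u n < ε := by
  rw [Metric.tendsto_atTop]
  constructor
  · intro H ε hε
    obtain ⟨N, hN⟩ := H ε hε
    exact ⟨N, fun n hn => by simpa [Real.dist_eq, abs_of_nonneg (h n)] using hN n hn⟩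
  · intro H ε hε
    obtain ⟨N, hN⟩ := H ε hε
    exact ⟨N, fun n hn => by simpa [Real.dist_eq, abs_of_nonneg (h n)] using hN n hn⟩

/-- The nonwandering set is closed. -/
lemma nonWandering_closed (f : X → X) : IsClosed (NonWandering f) := by
  rw [← isOpen_compl_iff]
  rw [isOpen_iff_mem_nhds]
  intro x hx
  simp only [Set.mem_compl_iff, NonWandering, Set.mem_setOf_eq, not_forall] at hx
  obtain ⟨U, hU, hUn⟩ := hx
  obtain ⟨V, hVU, hVopen, hxV⟩ := mem_nhds_iff.mp hU
  refine Filter.mem_of_superset (hVopen.mem_nhds hxV) ?_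
  intro z hz
  simp only [Set.mem_compl_iff, NonWandering, Set.mem_setOf_eq, not_forall]
  refine ⟨V, hVopen.mem_nhds hz, ?_⟩
  push_neg
  intro n hn
  push_neg at hUn
  have := hUn n hn
  rw [Set.eq_empty_iff_forall_notMem] at this ⊢
  intro p hp
  exact this p ⟨Set.image_mono hVU hp.1, hVU hp.2⟩

lemma nonWandering_subset_chainRecurrent (f : X → X) (he : EquicontMap f) :
    NonWandering f ⊆ ChainRecurrent f := by
  intro x hx δ hδ
  obtain ⟨δe, hδe, hδe'⟩ := he (δ/3) (by linarith)
  set δ₁ := min δe (δ/3) with hδ₁def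
  have hδ₁pos : 0 < δ₁ := lt_min hδe (by linarith)
  obtain ⟨n, hn, q, hq⟩ := hx (Metric.ball x δ₁) (Metric.ball_mem_nhds x hδ₁pos)
  obtain ⟨⟨u, huU, hqu⟩, hqU⟩ := hq
  rw [Metric.mem_ball] at huU hqU
  have hux : dist x u ≤ δe := by
    rw [dist_comm]; exact le_trans huU.le (min_le_left _ _)
  have hfxfu : dist (f x) (f u) ≤ δ / 3 := by
    have := hδe' x u hux 1
    simpa using this
  refine ⟨n, hn, (fun i => if i = 0 ∨ n ≤ i then x else f^[i] u), by simp,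
    by simp [Nat.le_refl], fun i _ => Set.mem_univ _, ?_⟩
  intro i hi
  dsimp only
  by_cases h0 : i = 0
  · subst h0
    rw [if_pos (Or.inl rfl)]
    by_cases h1 : n ≤ 1
    · rw [if_pos (Or.inr h1)]
      have hq1 : dist (f^[n] u) x < δ₁ := hqu ▸ hqU
      have hn1 : n = 1 := by omega
      rw [hn1] at hq1
      simp only [Function.iterate_one] at hq1
      calc dist (f x) x ≤ dist (f x) (f u) + dist (f u) x := dist_triangle _ _ _
        _ ≤ δ/3 + δ₁ := add_le_add hfxfu hq1.le
        _ ≤ δ/3 + δ/3 := by have := min_le_right δe (δ/3); linarith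
        _ ≤ δ := by linarith
    · rw [if_neg (by omega)]
      simpa using le_trans hfxfu (by linarith)
  · rw [if_neg (by omega)]
    by_cases h1 : n ≤ i + 1
    · rw [if_pos (Or.inr h1)]
      have hin : i + 1 = n := by omega
      have : f (f^[i] u) = f^[n] u := by
        rw [← Function.iterate_succ_apply' f i u, ← hin]
      rw [this, hqu]
      exact le_trans hqU.le (le_trans (min_le_right _ _) (by linarith))
    · rw [if_neg (by omega)]
      rw [← Function.iterate_succ_apply' f i u]
      simp [hδ.le]

lemma chainRecurrent_subset_nonWandering (f : X → X) (hsh : HasShadowing f) :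
    ChainRecurrent f ⊆ NonWandering f := by
  intro x hx U hU
  obtain ⟨r, hr, hball⟩ := Metric.mem_nhds_iff.mp hU
  obtain ⟨δ, hδ, hδ'⟩ := hsh (r/2) (by linarith)
  obtain ⟨k, hk, c, hc0, hck, -, hcerr⟩ := hx δ hδ
  -- periodic extension
  have hper : IsPseudoOrbit f δ (fun i => c (i % k)) := by
    intro i
    dsimp only
    have hik : i % k < k := Nat.mod_lt _ (by omega)
    have key : (i + 1) % k = (i % k + 1) % k := ((Nat.mod_modEq i k).add_right 1).symm
    by_cases h : i % k + 1 = k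
    · rw [key, h, Nat.mod_self]
      have h2 := hcerr (i % k) hik
      rw [h, hck, ← hc0] at h2
      exact h2
    · rw [key, Nat.mod_eq_of_lt (show i % k + 1 < k by omega)]
      exact hcerr (i % k) hik
  obtain ⟨y, hy⟩ := hδ' _ hper
  have hy0 : dist x y < r := by
    have := hy 0
    simp only [Nat.zero_mod, hc0, Function.iterate_zero, id_eq] at this
    linarith
  have hyk : dist x (f^[k] y) < r := by
    have := hy k
    simp only [Nat.mod_self, hc0] at this
    linarith
  refine ⟨k, by omega, f^[k] y, ⟨⟨y, hball (by simpa [Metric.mem_ball, dist_comm] using hy0), rfl⟩,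
    hball (by simpa [Metric.mem_ball, dist_comm] using hyk)⟩⟩

lemma chainRecurrent_subset_image [CompactSpace X] (f : X → X) (hf : Continuous f) :
    ChainRecurrent f ⊆ f '' ChainRecurrent f := by
  intro x hx
  have hchain : ∀ n : ℕ, ∃ k, k ≥ 1 ∧ ∃ c : ℕ → X, c 0 = x ∧ c k = x ∧
      ∀ i < k, dist (f (c i)) (c (i+1)) ≤ 1/(n+1) := by
    intro n
    obtain ⟨k, hk, c, h0, hk', -, herr⟩ := hx (1/(n+1)) (by positivity)
    exact ⟨k, hk, c, h0, hk', herr⟩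
  choose k hk c hc0 hck herr using hchain
  set p : ℕ → X := fun n => c n (k n - 1) with hp
  obtain ⟨q, -, φ, hφ, hconv⟩ := isCompact_univ.tendsto_subseq (fun n => Set.mem_univ (p n))
  have hfp : ∀ n, dist (f (p n)) x ≤ 1/(n+1) := by
    intro n
    have h1 := herr n (k n - 1) (by have := hk n; omega)
    rwa [show k n - 1 + 1 = k n by have := hk n; omega, hck n] at h1
  have hfq : f q = x := by
    have h1 : Tendsto (fun j => f (p (φ j))) atTop (nhds (f q)) := (hf.tendsto q).comp hconv
    have h2 : Tendsto (fun j => f (p (φ j))) atTop (nhds x) := by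
      rw [tendsto_iff_dist_tendsto_zero]
      apply squeeze_zero (fun j => dist_nonneg) (fun j => hfp (φ j))
      apply squeeze_zero (fun j => by positivity) (fun j => ?_)
        (tendsto_one_div_add_atTop_nhds_zero_nat)
      have hj : (j:ℝ) + 1 ≤ (φ j : ℝ) + 1 := by
        have h3 : j ≤ φ j := hφ.le_apply
        have h4 : (j:ℝ) ≤ (φ j : ℝ) := Nat.cast_le.mpr h3
        linarith
      exact one_div_le_one_div_of_le (by positivity) hj
    exact tendsto_nhds_unique h1 h2
  refine ⟨q, ?_, hfq⟩
  intro δ hδ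
  obtain ⟨N, hN⟩ := exists_nat_one_div_lt (show (0:ℝ) < δ/2 by linarith)
  rw [Metric.tendsto_atTop] at hconv
  obtain ⟨J, hJ⟩ := hconv (δ/2) (by linarith)
  set j := max J N with hj
  set n := φ j with hn
  have hnN : (1:ℝ)/(n+1) ≤ δ/2 := by
    have h1 : N ≤ n := le_trans (le_max_right J N) (hφ.le_apply)
    have h2 : (1:ℝ)/(n+1) ≤ 1/(N+1) := by
      apply one_div_le_one_div_of_le (by positivity)
      have h3 : (N:ℝ) ≤ (n:ℝ) := Nat.cast_le.mpr h1
      linarith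
    linarith [hN.le]
  have hpq : dist (p n) q < δ/2 := hJ j (le_max_left J N)
  set K := k n with hK
  have hK1 : 1 ≤ K := hk n
  refine ⟨K, hK1, (fun i => if i = 0 ∨ K ≤ i then q else c n (i - 1)), by simp,
    by simp [hK1], fun i _ => Set.mem_univ _, ?_⟩
  intro i hi
  dsimp only
  by_cases h0 : i = 0
  · subst h0
    rw [if_pos (Or.inl rfl)]
    by_cases h1 : K ≤ 1
    · rw [if_pos (Or.inr h1)]
      have hKeq : K = 1 := by omega
      have hpx : p n = x := by rw [hp]; simp only [← hK, hKeq]; exact hc0 n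
      rw [hfq, ← hpx]
      linarith [hpq.le]
    · rw [if_neg (by omega)]
      simp only [Nat.sub_self]
      rw [hfq, hc0 n]
      simp [hδ.le]
  · rw [if_neg (by omega)]
    by_cases h1 : K ≤ i + 1
    · rw [if_pos (Or.inr h1)]
      have hieq : i = K - 1 := by omega
      have h2 := herr n (K - 2) (by omega)
      rw [show K - 2 + 1 = K - 1 by omega] at h2
      calc dist (f (c n (i - 1))) q ≤ dist (f (c n (i-1))) (c n (K-1)) + dist (c n (K-1)) q :=
            dist_triangle _ _ _
        _ ≤ 1/(n+1) + δ/2 := by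
            refine add_le_add ?_ hpq.le
            rw [show i - 1 = K - 2 by omega]
            exact h2
        _ ≤ δ := by linarith
    · rw [if_neg (by omega)]
      have h2 := herr n (i - 1) (by omega)
      rw [show i - 1 + 1 = i by omega] at h2
      calc dist (f (c n (i-1))) (c n (i + 1 - 1)) = dist (f (c n (i-1))) (c n i) := by
            rw [show i + 1 - 1 = i by omega]
        _ ≤ 1/(n+1) := h2
        _ ≤ δ := by linarith

lemma limitPoint_mem_chainRecurrent (f : X → X) (he : EquicontMap f)
    {x : ℕ → X} (hx : IsLimitPseudoOrbit f x) {φ : ℕ → ℕ} (hφ : StrictMono φ)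
    {p : X} (hconv : Tendsto (x ∘ φ) atTop (nhds p)) : p ∈ ChainRecurrent f := by
  intro δ hδ
  obtain ⟨δe, hδepos, hδe⟩ := he (δ/3) (by linarith)
  set δ₁ := min δe (δ/3) with hδ₁def
  have hδ₁pos : 0 < δ₁ := lt_min hδepos (by linarith)
  obtain ⟨N, hN⟩ := (tendsto_zero_iff_aux (fun i => dist_nonneg)).mp hx (δ/3) (by linarith)
  obtain ⟨J, hJ⟩ := Metric.tendsto_atTop.mp hconv δ₁ hδ₁pos
  set j := max J N with hjdef
  set a := φ j with hadef
  set k := φ (j+1) - φ j with hkdef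
  have hklt : φ j < φ (j + 1) := hφ (by omega)
  have hk1 : 1 ≤ k := by omega
  have haN : N ≤ a := le_trans (le_max_right J N) hφ.le_apply
  have hj1 : dist (x a) p < δ₁ := hJ j (le_max_left J N)
  have hj2 : dist (x (a + k)) p < δ₁ := by
    have : a + k = φ (j+1) := by omega
    rw [this]
    exact hJ (j+1) (le_trans (le_max_left J N) (by omega))
  have hfp : dist (f p) (f (x a)) ≤ δ/3 := by
    have h1 : dist p (x a) ≤ δe := by
      rw [dist_comm]; exact le_trans hj1.le (min_le_left _ _)
    simpa using hδe p (x a) h1 1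
  refine ⟨k, hk1, (fun i => if i = 0 ∨ k ≤ i then p else x (a + i)), by simp,
    by simp [hk1], fun i _ => Set.mem_univ _, ?_⟩
  intro i hi
  dsimp only
  by_cases h0 : i = 0
  · subst h0
    rw [if_pos (Or.inl rfl)]
    by_cases h1 : k ≤ 1
    · rw [if_pos (Or.inr h1)]
      have hkeq : k = 1 := by omega
      calc dist (f p) p ≤ dist (f p) (f (x a)) + dist (f (x a)) (x (a+1)) + dist (x (a+1)) p :=
            dist_triangle4 _ _ _ _
        _ ≤ δ/3 + δ/3 + δ₁ := by
            refine add_le_add (add_le_add hfp (hN a haN).le) ?_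
            have : a + 1 = a + k := by omega
            rw [this]; exact hj2.le
        _ ≤ δ := by have := min_le_right δe (δ/3); linarith
    · rw [if_neg (by omega)]
      calc dist (f p) (x (a + 1)) ≤ dist (f p) (f (x a)) + dist (f (x a)) (x (a+1)) :=
            dist_triangle _ _ _
        _ ≤ δ/3 + δ/3 := add_le_add hfp (hN a haN).le
        _ ≤ δ := by linarith
  · rw [if_neg (by omega)]
    by_cases h1 : k ≤ i + 1
    · rw [if_pos (Or.inr h1)]
      have hieq : i + 1 = k := by omega
      calc dist (f (x (a + i))) p ≤ dist (f (x (a+i))) (x (a+i+1)) + dist (x (a+i+1)) p :=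
            dist_triangle _ _ _
        _ ≤ δ/3 + δ₁ := by
            refine add_le_add (hN (a+i) (by omega)).le ?_
            have : a + i + 1 = a + k := by omega
            rw [this]; exact hj2.le
        _ ≤ δ := by have := min_le_right δe (δ/3); linarith
    · rw [if_neg (by omega)]
      have h2 := (hN (a+i) (by omega)).le
      calc dist (f (x (a + i))) (x (a + (i+1))) = dist (f (x (a+i))) (x (a+i+1)) := by
            rw [show a + (i+1) = a + i + 1 by omega]
        _ ≤ δ/3 := h2
        _ ≤ δ := by linarith

lemma cr_pullback [CompactSpace X] (f : X → X) (hf : Continuous f) :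
    ∀ i (z : X), z ∈ ChainRecurrent f → ∃ y ∈ ChainRecurrent f, f^[i] y = z := by
  intro i
  induction i with
  | zero => exact fun z hz => ⟨z, hz, rfl⟩
  | succ i ih =>
    intro z hz
    obtain ⟨y', hy', hfy'⟩ := ih z hz
    obtain ⟨y, hy, hfy⟩ := chainRecurrent_subset_image f hf hy'
    exact ⟨y, hy, by rw [Function.iterate_succ_apply, hfy, hfy']⟩

lemma part1 [CompactSpace X] (f : X → X) (hf : Continuous f) (he : EquicontMap f)
    (hsh : HasShadowing f) (x : ℕ → X) (hxΩ : ∀ i, x i ∈ NonWandering f)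
    (hx : IsLimitPseudoOrbit f x) : ∃ y ∈ NonWandering f, LimitShadows f x y := by
  have hpull : ∀ i, ∃ y ∈ ChainRecurrent f, f^[i] y = x i := fun i =>
    cr_pullback f hf i (x i) (nonWandering_subset_chainRecurrent f he (hxΩ i))
  choose y hyCR hyx using hpull
  obtain ⟨z, -, φ, hφ, hconv⟩ := isCompact_univ.tendsto_subseq (fun i => Set.mem_univ (y i))
  have hzΩ : z ∈ NonWandering f := by
    apply (nonWandering_closed f).mem_of_tendsto hconv
    exact Eventually.of_forall (fun j => chainRecurrent_subset_nonWandering f hsh (hyCR (φ j)))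
  refine ⟨z, hzΩ, ?_⟩
  refine (tendsto_zero_iff_aux (fun i => dist_nonneg)).mpr ?_
  intro ε hε
  obtain ⟨δe, hδepos, hδe⟩ := he (ε/4) (by linarith)
  set ε₂ := min δe (ε/4) with hε₂def
  have hε₂pos : 0 < ε₂ := lt_min hδepos (by linarith)
  obtain ⟨δ₂, hδ₂pos, hδ₂⟩ := hsh ε₂ hε₂pos
  obtain ⟨N, hN⟩ := (tendsto_zero_iff_aux (fun i => dist_nonneg)).mp hx δ₂ hδ₂pos
  have htail : IsPseudoOrbit f δ₂ (fun i => x (N + i)) := by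
    intro i
    dsimp only
    have h1 := (hN (N + i) (by omega)).le
    rwa [show N + i + 1 = N + (i+1) by omega] at h1
  obtain ⟨w, hw⟩ := hδ₂ _ htail
  obtain ⟨J₁, hJ₁⟩ := Metric.tendsto_atTop.mp hconv δe hδepos
  set j := max J₁ N with hjdef
  set i₀ := φ j with hi₀def
  have hi₀N : N ≤ i₀ := le_trans (le_max_right _ _) hφ.le_apply
  have hyy : dist (y i₀) z ≤ δe := (hJ₁ j (le_max_left _ _)).le
  refine ⟨i₀, fun m hm => ?_⟩
  have hmN : N ≤ m := le_trans hi₀N hm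
  have t1 : dist (x m) (f^[m - N] w) ≤ ε₂ := by
    have h1 := hw (m - N)
    dsimp only at h1
    rwa [show N + (m - N) = m by omega] at h1
  have t2 : dist (f^[m - N] w) (f^[m - i₀] (x i₀)) ≤ ε/4 := by
    have hbase : dist (x i₀) (f^[i₀ - N] w) ≤ δe := by
      have h1 := hw (i₀ - N)
      dsimp only at h1
      rw [show N + (i₀ - N) = i₀ by omega] at h1
      exact le_trans h1 (min_le_left _ _)
    have h2 := hδe (x i₀) (f^[i₀ - N] w) hbase (m - i₀)
    rw [← Function.iterate_add_apply f (m - i₀) (i₀ - N) w,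
      show m - i₀ + (i₀ - N) = m - N by omega] at h2
    rw [dist_comm]
    exact h2
  have t3 : dist (f^[m - i₀] (x i₀)) (f^[m] z) ≤ ε/4 := by
    have h2 := hδe (y i₀) z hyy m
    rw [show m = (m - i₀) + i₀ by omega, Function.iterate_add_apply,
      Function.iterate_add_apply, hyx i₀] at h2
    have key : f^[m] z = f^[m - i₀] (f^[i₀] z) := by
      rw [← Function.iterate_add_apply, Nat.sub_add_cancel hm]
    rw [key]
    exact h2
  calc dist (x m) (f^[m] z)
      ≤ dist (x m) (f^[m - N] w) + dist (f^[m - N] w) (f^[m - i₀] (x i₀))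
        + dist (f^[m - i₀] (x i₀)) (f^[m] z) := dist_triangle4 _ _ _ _
    _ ≤ ε₂ + ε/4 + ε/4 := add_le_add (add_le_add t1 t2) t3
    _ < ε := by have := min_le_right δe (ε/4); linarith

/-- an equicontinuous map with shadowing has limit shadowing on Ω(f)
and hence the limit shadowing property. -/
theorem equicontinuous_shadowing_implies_limit_shadowing
    [CompactSpace X] (f : X → X) (hf : Continuous f) (he : EquicontMap f)
    (hsh : HasShadowing f) :
    (∀ x : ℕ → X, (∀ i, x i ∈ NonWandering f) → IsLimitPseudoOrbit f x →
      ∃ y ∈ NonWandering f, LimitShadows f x y) ∧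
      HasLimitShadowing f := by
  refine ⟨fun x hxΩ hx => part1 f hf he hsh x hxΩ hx, ?_⟩
  intro x hx
  have hΩcl : IsClosed (NonWandering f) := nonWandering_closed f
  obtain ⟨p, -, ψ, hψ, hpconv⟩ := isCompact_univ.tendsto_subseq (fun i => Set.mem_univ (x i))
  have hpΩ : p ∈ NonWandering f := chainRecurrent_subset_nonWandering f hsh
    (limitPoint_mem_chainRecurrent f he hx hψ hpconv)
  have hΩne : (NonWandering f).Nonempty := ⟨p, hpΩ⟩
  have hΩcmp : IsCompact (NonWandering f) := hΩcl.isCompact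
  have hdist : ∀ ε > 0, ∃ N, ∀ n ≥ N, Metric.infDist (x n) (NonWandering f) < ε := by
    by_contra hcon
    push_neg at hcon
    obtain ⟨ε, hε, hfreq⟩ := hcon
    have h' : ∀ N, ∃ n > N, ε ≤ Metric.infDist (x n) (NonWandering f) := by
      intro N
      obtain ⟨n, hn, h⟩ := hfreq (N + 1)
      exact ⟨n, by omega, h⟩
    obtain ⟨φ, hφ, hP⟩ := Nat.exists_strictMono_subsequence h'
    obtain ⟨q, -, ψ2, hψ2, hconv2⟩ :=
      isCompact_univ.tendsto_subseq (fun j => Set.mem_univ (x (φ j)))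
    have hcomp : Tendsto (x ∘ (φ ∘ ψ2)) atTop (nhds q) := hconv2
    have hq : q ∈ NonWandering f := chainRecurrent_subset_nonWandering f hsh
      (limitPoint_mem_chainRecurrent f he hx (hφ.comp hψ2) hcomp)
    have htend : Tendsto (fun j => Metric.infDist (x (φ (ψ2 j))) (NonWandering f)) atTop
        (nhds (Metric.infDist q (NonWandering f))) :=
      ((Metric.continuous_infDist_pt (NonWandering f)).tendsto q).comp hconv2
    have h0 : Metric.infDist q (NonWandering f) = 0 := Metric.infDist_zero_of_mem hq
    have hge : ε ≤ Metric.infDist q (NonWandering f) :=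
      ge_of_tendsto htend (Eventually.of_forall fun j => hP (ψ2 j))
    linarith
  have hproj : ∀ i, ∃ z ∈ NonWandering f,
      Metric.infDist (x i) (NonWandering f) = dist (x i) z :=
    fun i => hΩcmp.exists_infDist_eq_dist hΩne (x i)
  choose x' hx'Ω hx'd using hproj
  have hx'near : ∀ ε > 0, ∃ N, ∀ n ≥ N, dist (x n) (x' n) < ε := by
    intro ε hε
    obtain ⟨N, hN⟩ := hdist ε hε
    exact ⟨N, fun n hn => (hx'd n) ▸ hN n hn⟩
  have hx'po : IsLimitPseudoOrbit f x' := by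
    refine (tendsto_zero_iff_aux (fun i => dist_nonneg)).mpr ?_
    intro ε hε
    obtain ⟨δe, hδepos, hδe⟩ := he (ε/3) (by linarith)
    obtain ⟨N1, hN1⟩ := hx'near (min δe (ε/3)) (lt_min hδepos (by linarith))
    obtain ⟨N2, hN2⟩ := (tendsto_zero_iff_aux (fun i => dist_nonneg)).mp hx (ε/3) (by linarith)
    refine ⟨max N1 N2, fun i hi => ?_⟩
    have hiN1 : N1 ≤ i := le_trans (le_max_left _ _) hi
    have hiN2 : N2 ≤ i := le_trans (le_max_right _ _) hi
    have t1 : dist (f (x' i)) (f (x i)) ≤ ε/3 := by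
      have hb : dist (x' i) (x i) ≤ δe := by
        rw [dist_comm]
        exact le_trans (hN1 i hiN1).le (min_le_left _ _)
      simpa using hδe (x' i) (x i) hb 1
    have t2 : dist (f (x i)) (x (i+1)) < ε/3 := hN2 i hiN2
    have t3 : dist (x (i+1)) (x' (i+1)) < ε/3 :=
      lt_of_lt_of_le (hN1 (i+1) (by omega)) (min_le_right _ _)
    calc dist (f (x' i)) (x' (i+1))
        ≤ dist (f (x' i)) (f (x i)) + dist (f (x i)) (x (i+1)) + dist (x (i+1)) (x' (i+1)) :=
          dist_triangle4 _ _ _ _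
      _ < ε := by linarith
  obtain ⟨yy, hyyΩ, hyysh⟩ := part1 f hf he hsh x' hx'Ω hx'po
  refine ⟨yy, ?_⟩
  refine (tendsto_zero_iff_aux (fun i => dist_nonneg)).mpr ?_
  intro ε hε
  obtain ⟨N1, hN1⟩ := hx'near (ε/2) (by linarith)
  obtain ⟨N2, hN2⟩ := (tendsto_zero_iff_aux (fun i => dist_nonneg)).mp hyysh (ε/2) (by linarith)
  refine ⟨max N1 N2, fun i hi => ?_⟩
  have t1 : dist (x i) (x' i) < ε/2 := hN1 i (le_trans (le_max_left _ _) hi)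
  have t2 : dist (x' i) (f^[i] yy) < ε/2 := hN2 i (le_trans (le_max_right _ _) hi)
  calc dist (x i) (f^[i] yy) ≤ dist (x i) (x' i) + dist (x' i) (f^[i] yy) := dist_triangle _ _ _
    _ < ε := by linarith
end
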